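/- arXiv:1507.04944 — 5 statements merged into one kernel-verified Lean document; each statement's English description precedes it below -/
import Mathlib

section
/- Let H be a graph. (i) If H contains no (not necessarily induced) subgraph isomorphic to the path P_4 on four vertices, then H is a disjoint union of stars and triangles. (ii) If for every subgraph of H isomorphic to P_4 the four vertices of that path induce a complete graph K_4 in H, then H is a disjoint union of stars and cliques. (iii) If for every subgraph of H isomorphic to P_4 the four vertices of that path induce in H either K_4 or K_4 minus one edge, then H is a disjoint union of suns. -/
open SimpleGraph

def InducedC2kFree (k : ℕ) {n : ℕ} (G : SimpleGraph (Fin n)) : Prop :=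
  ¬ Nonempty ((cycleGraph (2 * k)) ↪g G)

def IsStarGraph {W : Type*} (H : SimpleGraph W) : Prop :=
  {v : W | ∃ a b, a ≠ b ∧ H.Adj v a ∧ H.Adj v b}.Subsingleton

def IsCliqueGraph {W : Type*} (H : SimpleGraph W) : Prop :=
  ∀ u v : W, u ≠ v → H.Adj u v

def IsTriangleGraph {W : Type*} (H : SimpleGraph W) : Prop :=
  Nat.card W = 3 ∧ IsCliqueGraph H

def IsSunGraph {W : Type*} (H : SimpleGraph W) : Prop :=
  ∃ B : Set W, ∀ u v : W, H.Adj u v ↔ u ≠ v ∧ ¬(u ∈ B ∧ v ∈ B)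

def UnionOfStarsAndTriangles {W : Type*} (H : SimpleGraph W) : Prop :=
  ∀ c : H.ConnectedComponent,
    IsStarGraph (H.induce c.supp) ∨ IsTriangleGraph (H.induce c.supp)

def UnionOfStarsAndCliques {W : Type*} (H : SimpleGraph W) : Prop :=
  ∀ c : H.ConnectedComponent,
    IsStarGraph (H.induce c.supp) ∨ IsCliqueGraph (H.induce c.supp)

def UnionOfCliques {W : Type*} (H : SimpleGraph W) : Prop :=
  ∀ c : H.ConnectedComponent, IsCliqueGraph (H.induce c.supp)

def UnionOfSuns {W : Type*} (H : SimpleGraph W) : Prop :=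
  ∀ c : H.ConnectedComponent, IsSunGraph (H.induce c.supp)

def IsPartition {n m : ℕ} (Q : Fin m → Set (Fin n)) : Prop :=
  ∀ x : Fin n, ∃! i, x ∈ Q i

def TemplateClassProp (k : ℕ) {W : Type*} (H : SimpleGraph W) : Prop :=
  if k = 4 then UnionOfSuns H
  else if k = 5 then UnionOfStarsAndCliques H
  else UnionOfStarsAndTriangles H

def IsKTemplateOn (k : ℕ) {n : ℕ} (G : SimpleGraph (Fin n))
    (Q : Fin (k - 1) → Set (Fin n)) : Prop :=
  IsPartition Q ∧
  (∀ i : Fin (k - 1), (i : ℕ) ≠ 0 → IsCliqueGraph (G.induce (Q i))) ∧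
  (∀ i : Fin (k - 1), (i : ℕ) = 0 → TemplateClassProp k ((G.induce (Q i))ᶜ))

def IsKTemplate (k : ℕ) {n : ℕ} (G : SimpleGraph (Fin n)) : Prop :=
  ∃ Q : Fin (k - 1) → Set (Fin n), IsKTemplateOn k G Q

noncomputable def turanEdges (m n : ℕ) : ℕ :=
  Nat.card (SimpleGraph.turanGraph n m).edgeSet

def IsKSun (k : ℕ) {W : Type*} (H : SimpleGraph W) : Prop :=
  if k = 4 then IsSunGraph H
  else if k = 5 then IsStarGraph H ∨ IsCliqueGraph H
  else IsStarGraph H ∨ IsTriangleGraph H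

def UnionOfKSuns (k : ℕ) {W : Type*} (H : SimpleGraph W) : Prop :=
  ∀ c : H.ConnectedComponent, IsKSun k (H.induce c.supp)

noncomputable def fk (k n : ℕ) : ℕ :=
  Nat.card {G : SimpleGraph (Fin n) // UnionOfKSuns k Gᶜ}

noncomputable def internalNonEdges (k : ℕ) {n : ℕ} (G : SimpleGraph (Fin n))
    (Q : Fin (k - 1) → Set (Fin n)) : ℕ :=
  ∑ i : Fin (k - 1), Nat.card ((G.induce (Q i))ᶜ.edgeSet)

def IsOptimalPartition (k : ℕ) {n : ℕ} (G : SimpleGraph (Fin n))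
    (Q : Fin (k - 1) → Set (Fin n)) : Prop :=
  IsPartition Q ∧ ∀ Q' : Fin (k - 1) → Set (Fin n), IsPartition Q' →
    internalNonEdges k G Q ≤ internalNonEdges k G Q'

def MemFQeta (k : ℕ) (η : ℝ) {n : ℕ} (G : SimpleGraph (Fin n))
    (Q : Fin (k - 1) → Set (Fin n)) : Prop :=
  InducedC2kFree k G ∧ IsOptimalPartition k G Q ∧
    (internalNonEdges k G Q : ℝ) ≤ η * n ^ 2

noncomputable def eBetween {n : ℕ} (G : SimpleGraph (Fin n)) (A B : Set (Fin n)) : ℕ :=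
  Nat.card {p : Fin n × Fin n // p.1 ∈ A ∧ p.2 ∈ B ∧ G.Adj p.1 p.2}

def PropF1 (k : ℕ) (ν : ℝ) {n : ℕ} (G : SimpleGraph (Fin n))
    (Q : Fin (k - 1) → Set (Fin n)) : Prop :=
  ∀ i j : Fin (k - 1), i ≠ j → ∀ Ui Uj : Set (Fin n), Ui ⊆ Q i → Uj ⊆ Q j →
    ν ^ 2 * (n : ℝ) ^ 2 ≤ (Ui.ncard : ℝ) * (Uj.ncard : ℝ) →
    (1 / 4 : ℝ) ≤ (eBetween G Ui Uj : ℝ) / ((Ui.ncard : ℝ) * (Uj.ncard : ℝ)) ∧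
      (eBetween G Ui Uj : ℝ) / ((Ui.ncard : ℝ) * (Uj.ncard : ℝ)) ≤ 3 / 4

def PropF2 (k : ℕ) (ν : ℝ) {n : ℕ} (Q : Fin (k - 1) → Set (Fin n)) : Prop :=
  ∀ i : Fin (k - 1), |((Q i).ncard : ℝ) - (n : ℝ) / ((k : ℝ) - 1)| ≤ ν * n

def MemFQetaMu (k : ℕ) (η μ : ℝ) {n : ℕ} (G : SimpleGraph (Fin n))
    (Q : Fin (k - 1) → Set (Fin n)) : Prop :=
  MemFQeta k η G Q ∧ PropF1 k μ G Q ∧ PropF2 k μ Q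

noncomputable def xi (p : ℝ) : ℝ := -(3 / 2) * p * Real.logb 2 p

def IsMultiCopy {α β : Type*} (H : SimpleGraph α) (R B : SimpleGraph β) (f : α ↪ β) : Prop :=
  (∀ u v, H.Adj u v → R.Adj (f u) (f v)) ∧
  (∀ u v, u ≠ v → ¬ H.Adj u v → B.Adj (f u) (f v))

def HasMultiCopy {α β : Type*} (H : SimpleGraph α) (R B : SimpleGraph β) : Prop :=
  ∃ f : α ↪ β, IsMultiCopy H R B f

def cliqueEdgeSet {V : Type*} (S : Set V) : Set (Sym2 V) :=
  {e | ¬ e.IsDiag ∧ ∀ x ∈ e, x ∈ S}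

def IsMatchingSet {V : Type*} (s : Set (Sym2 V)) : Prop :=
  (∀ e ∈ s, ¬ e.IsDiag) ∧
  ∀ e ∈ s, ∀ f ∈ s, e ≠ f → ∀ x ∈ e, x ∉ f

def IsLinearForest {W : Type*} (H : SimpleGraph W) : Prop :=
  H.IsAcyclic ∧
  ∀ v a b c : W, H.Adj v a → H.Adj v b → H.Adj v c → a = b ∨ a = c ∨ b = c

/-- `f` is a (not necessarily induced) copy of the path `P₄` on four vertices in `H`. -/
def IsP4Copy {V : Type*} (H : SimpleGraph V) (f : Fin 4 ↪ V) : Prop :=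
  ∀ u v : Fin 4, (SimpleGraph.pathGraph 4).Adj u v → H.Adj (f u) (f v)

/-!
In a connected graph in which the vertices of every `P₄` span at least `K₄` minus an edge, any
two vertices are at distance at most two, and therefore every edge `pq` dominates the graph: a
vertex `r` adjacent to neither `p` nor `q` would, through a common neighbour `s` of `q` and `r`,
give a path `p q s r` missing two of its three chords. Hence no edge joins two vertices that
both have a non-neighbour, so these vertices form the side of a sun. If every `P₄` spans a `K₄`,
a sun with two side vertices and two body vertices contains a `P₄` between its side vertices,
so the sun is a star or a clique; and a `P₄`-free clique has at most three vertices.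
-/

namespace SimpleGraph

variable {W W' : Type*} {G : SimpleGraph W}

def EveryP4SpansK4 (G : SimpleGraph W) : Prop :=
  ∀ f : Fin 4 ↪ W, IsP4Copy G f → ∀ u v : Fin 4, u ≠ v → G.Adj (f u) (f v)

def EveryP4SpansK4MinusEdge (G : SimpleGraph W) : Prop :=
  ∀ f : Fin 4 ↪ W, IsP4Copy G f →
    ∃ a b : Fin 4, ∀ u v : Fin 4, u ≠ v →
      (u = a ∧ v = b) ∨ (u = b ∧ v = a) ∨ G.Adj (f u) (f v)

theorem exists_isP4Copy {w x y z : W} (hwy : w ≠ y) (hwz : w ≠ z) (hxz : x ≠ z)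
    (hwx : G.Adj w x) (hxy : G.Adj x y) (hyz : G.Adj y z) :
    ∃ f : Fin 4 ↪ W, IsP4Copy G f ∧ f 0 = w ∧ f 1 = x ∧ f 2 = y ∧ f 3 = z := by
  have := hwx.ne; have := hxy.ne; have := hyz.ne
  have hinj : Function.Injective ![w, x, y, z] := by
    intro a b hab
    fin_cases a <;> fin_cases b <;> simp_all
  refine ⟨⟨_, hinj⟩, fun u v huv => ?_, rfl, rfl, rfl, rfl⟩
  rw [pathGraph_adj] at huv
  fin_cases u <;> fin_cases v <;> simp_all [adj_comm]

theorem IsP4Copy.trans_embedding {G' : SimpleGraph W'} {f : Fin 4 ↪ W'} (hf : IsP4Copy G' f)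
    (φ : G' ↪g G) : IsP4Copy G (f.trans φ.toEmbedding) :=
  fun u v huv => φ.map_adj_iff.mpr (hf u v huv)

theorem EveryP4SpansK4.comap {G' : SimpleGraph W'} (hG : EveryP4SpansK4 G) (φ : G' ↪g G) :
    EveryP4SpansK4 G' :=
  fun _ hf u v huv => φ.map_adj_iff.mp (hG _ (hf.trans_embedding φ) u v huv)

theorem EveryP4SpansK4MinusEdge.comap {G' : SimpleGraph W'} (hG : EveryP4SpansK4MinusEdge G)
    (φ : G' ↪g G) : EveryP4SpansK4MinusEdge G' := by
  intro f hf
  obtain ⟨a, b, hab⟩ := hG _ (hf.trans_embedding φ)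
  exact ⟨a, b, fun u v huv => (hab u v huv).imp_right (Or.imp_right φ.map_adj_iff.mp)⟩

theorem EveryP4SpansK4.everyP4SpansK4MinusEdge (hG : EveryP4SpansK4 G) :
    EveryP4SpansK4MinusEdge G :=
  fun f hf => ⟨0, 0, fun u v huv => Or.inr (Or.inr (hG f hf u v huv))⟩

theorem everyP4SpansK4_of_not_exists_isP4Copy (hG : ¬ ∃ f : Fin 4 ↪ W, IsP4Copy G f) :
    EveryP4SpansK4 G :=
  fun f hf => absurd ⟨f, hf⟩ hG

theorem EveryP4SpansK4MinusEdge.two_chords (hG : EveryP4SpansK4MinusEdge G) {w x y z : W}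
    (hwy : w ≠ y) (hwz : w ≠ z) (hxz : x ≠ z)
    (hwx : G.Adj w x) (hxy : G.Adj x y) (hyz : G.Adj y z) :
    (G.Adj w y ∧ G.Adj w z) ∨ (G.Adj w y ∧ G.Adj x z) ∨ (G.Adj w z ∧ G.Adj x z) := by
  obtain ⟨f, hf, rfl, rfl, rfl, rfl⟩ := exists_isP4Copy hwy hwz hxz hwx hxy hyz
  obtain ⟨a, b, hab⟩ := hG f hf
  -- the chords `02`, `03`, `13` are distinct pairs, so at most one of them is the missing pair `ab`
  rcases hab 0 2 (by decide) with (⟨rfl, rfl⟩ | ⟨rfl, rfl⟩ | h02) <;>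
    rcases hab 0 3 (by decide) with (⟨ha, hb⟩ | ⟨ha, hb⟩ | h03) <;>
      rcases hab 1 3 (by decide) with (⟨ha', hb'⟩ | ⟨ha', hb'⟩ | h13) <;>
        simp_all

theorem EveryP4SpansK4MinusEdge.eq_or_adj_or_exists_adj_adj (hG : EveryP4SpansK4MinusEdge G)
    {u v : W} (huv : G.Reachable u v) : u = v ∨ G.Adj u v ∨ ∃ w, G.Adj u w ∧ G.Adj w v := by
  obtain ⟨p⟩ := huv
  induction p with
  | nil => exact Or.inl rfl
  | @cons u a v hua p ih =>
    by_cases huv : u = v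
    · exact Or.inl huv
    by_cases hGuv : G.Adj u v
    · exact Or.inr (Or.inl hGuv)
    rcases ih with rfl | hav | ⟨w, haw, hwv⟩
    · exact absurd hua hGuv
    · exact Or.inr (Or.inr ⟨a, hua, hav⟩)
    · by_cases huw : u = w
      · exact Or.inr (Or.inl (huw ▸ hwv))
      by_cases hGuw : G.Adj u w
      · exact Or.inr (Or.inr ⟨w, hGuw, hwv⟩)
      have hav : a ≠ v := fun h => hGuv (h ▸ hua)
      rcases hG.two_chords huw huv hav hua haw hwv with h | h | h <;> tauto

theorem EveryP4SpansK4MinusEdge.adj_or_adj_of_adj (hG : EveryP4SpansK4MinusEdge G)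
    (hconn : G.Preconnected) {p q r : W} (hpq : G.Adj p q) (hpr : p ≠ r) (hqr : q ≠ r) :
    G.Adj p r ∨ G.Adj q r := by
  by_contra! ⟨hGpr, hGqr⟩
  obtain ⟨s, hqs, hsr⟩ : ∃ s, G.Adj q s ∧ G.Adj s r := by
    rcases hG.eq_or_adj_or_exists_adj_adj (hconn q r) with h | h | h
    · exact absurd h hqr
    · exact absurd h hGqr
    · exact h
  have hps : p ≠ s := fun h => hGpr (h ▸ hsr)
  rcases hG.two_chords hps hpr hqr hpq hqs hsr with h | h | h <;> tauto

theorem EveryP4SpansK4MinusEdge.isSunGraph (hG : EveryP4SpansK4MinusEdge G)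
    (hconn : G.Preconnected) : IsSunGraph G := by
  refine ⟨{v | ∃ w, v ≠ w ∧ ¬ G.Adj v w}, fun u v => ⟨fun huv => ⟨huv.ne, ?_⟩, ?_⟩⟩
  · rintro ⟨⟨x, hux, hGux⟩, ⟨y, hvy, hGvy⟩⟩
    have hvx : v ≠ x := by rintro rfl; exact hGux huv
    have hGvx : G.Adj v x := (hG.adj_or_adj_of_adj hconn huv hux hvx).resolve_left hGux
    have huy : u ≠ y := by rintro rfl; exact hGvy huv.symm
    have hGuy : G.Adj u y := (hG.adj_or_adj_of_adj hconn huv.symm hvy huy).resolve_left hGvy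
    have hxy : x ≠ y := by rintro rfl; exact hGvy hGvx
    rcases hG.two_chords (Ne.symm hux) hxy hvy hGvx.symm huv.symm hGuy with h | h | h <;>
      simp_all [adj_comm]
  · rintro ⟨huv, hB⟩
    by_contra hGuv
    exact hB ⟨⟨v, huv, hGuv⟩, ⟨u, Ne.symm huv, fun h => hGuv h.symm⟩⟩

section Sun

variable {B : Set W} (hB : ∀ u v : W, G.Adj u v ↔ u ≠ v ∧ ¬(u ∈ B ∧ v ∈ B))
include hB

theorem isCliqueGraph_of_subsingleton_side (hBs : B.Subsingleton) : IsCliqueGraph G :=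
  fun u v huv => (hB u v).2 ⟨huv, fun ⟨hu, hv⟩ => huv (hBs hu hv)⟩

theorem isStarGraph_of_subsingleton_body (hA : Bᶜ.Subsingleton) : IsStarGraph G := by
  refine hA.anti ?_
  rintro x ⟨a, b, hab, hxa, hxb⟩ hxB
  have ha : a ∈ Bᶜ := fun haB => ((hB x a).1 hxa).2 ⟨hxB, haB⟩
  have hb : b ∈ Bᶜ := fun hbB => ((hB x b).1 hxb).2 ⟨hxB, hbB⟩
  exact hab (hA ha hb)

theorem isStarGraph_or_isCliqueGraph_of_everyP4SpansK4 (hG : EveryP4SpansK4 G) :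
    IsStarGraph G ∨ IsCliqueGraph G := by
  by_cases hBs : B.Subsingleton
  · exact Or.inr (isCliqueGraph_of_subsingleton_side hB hBs)
  refine Or.inl (isStarGraph_of_subsingleton_body hB fun a₁ ha₁ a₂ ha₂ => ?_)
  obtain ⟨b₁, hb₁, b₂, hb₂, hb⟩ := Set.not_subsingleton_iff.mp hBs
  by_contra ha
  have hne : ∀ {a b}, a ∈ Bᶜ → b ∈ B → a ≠ b := fun ha hb h => ha (h ▸ hb)
  obtain ⟨f, hf, h0, -, -, h3⟩ := exists_isP4Copy (hne ha₂ hb₁).symm hb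
      (hne ha₁ hb₂) ((hB _ _).2 ⟨(hne ha₁ hb₁).symm, fun h => ha₁ h.2⟩)
      ((hB _ _).2 ⟨ha, fun h => ha₁ h.1⟩) ((hB _ _).2 ⟨hne ha₂ hb₂, fun h => ha₂ h.1⟩)
  have := hG f hf 0 3 (by decide)
  rw [h0, h3, hB] at this
  exact this.2 ⟨hb₁, hb₂⟩

end Sun

theorem IsCliqueGraph.isStarGraph_or_isTriangleGraph (hG : IsCliqueGraph G)
    (hP4 : ¬ ∃ f : Fin 4 ↪ W, IsP4Copy G f) : IsStarGraph G ∨ IsTriangleGraph G := by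
  refine or_iff_not_imp_left.mpr fun hstar => ⟨?_, hG⟩
  obtain ⟨v, ⟨a, b, hab, hva, hvb⟩, -⟩ := Set.not_subsingleton_iff.mp hstar
  have hcover : ∀ d, d = v ∨ d = a ∨ d = b := by
    by_contra! ⟨d, hdv, hda, hdb⟩
    obtain ⟨f, hf, -⟩ := exists_isP4Copy hvb.ne (Ne.symm hdv) (Ne.symm hda) hva
      (hG a b hab) (hG b d (Ne.symm hdb))
    exact hP4 ⟨f, hf⟩
  have hbij : Function.Bijective ![v, a, b] := by
    have := hva.ne; have := hvb.ne
    refine ⟨fun i j hij => ?_, fun d => ?_⟩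
    · fin_cases i <;> fin_cases j <;> simp_all
    · rcases hcover d with rfl | rfl | rfl
      exacts [⟨0, rfl⟩, ⟨1, rfl⟩, ⟨2, rfl⟩]
  rw [← Nat.card_eq_of_bijective _ hbij, Nat.card_fin]

variable (G)

theorem unionOfSuns_of_everyP4SpansK4MinusEdge (hG : EveryP4SpansK4MinusEdge G) :
    UnionOfSuns G :=
  fun c => (hG.comap (Embedding.induce c.supp)).isSunGraph c.connected_toSimpleGraph.preconnected

theorem unionOfStarsAndCliques_of_everyP4SpansK4 (hG : EveryP4SpansK4 G) :
    UnionOfStarsAndCliques G := fun c => by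
  obtain ⟨B, hB⟩ := unionOfSuns_of_everyP4SpansK4MinusEdge G hG.everyP4SpansK4MinusEdge c
  exact isStarGraph_or_isCliqueGraph_of_everyP4SpansK4 hB (hG.comap (Embedding.induce c.supp))

theorem unionOfStarsAndTriangles_of_not_exists_isP4Copy
    (hG : ¬ ∃ f : Fin 4 ↪ W, IsP4Copy G f) : UnionOfStarsAndTriangles G := fun c => by
  refine (unionOfStarsAndCliques_of_everyP4SpansK4 G
    (everyP4SpansK4_of_not_exists_isP4Copy hG) c).elim Or.inl fun hc => ?_
  exact hc.isStarGraph_or_isTriangleGraph fun ⟨_, hf⟩ =>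
    hG ⟨_, hf.trans_embedding (Embedding.induce c.supp)⟩

end SimpleGraph

theorem P4_structure_general {V : Type*} (H : SimpleGraph V) :
    ((¬ ∃ f : Fin 4 ↪ V, IsP4Copy H f) → UnionOfStarsAndTriangles H) ∧
    ((∀ f : Fin 4 ↪ V, IsP4Copy H f → ∀ u v : Fin 4, u ≠ v → H.Adj (f u) (f v)) →
      UnionOfStarsAndCliques H) ∧
    ((∀ f : Fin 4 ↪ V, IsP4Copy H f →
        ∃ a b : Fin 4, ∀ u v : Fin 4, u ≠ v →
          (u = a ∧ v = b) ∨ (u = b ∧ v = a) ∨ H.Adj (f u) (f v)) →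
      UnionOfSuns H) :=
  ⟨H.unionOfStarsAndTriangles_of_not_exists_isP4Copy, H.unionOfStarsAndCliques_of_everyP4SpansK4,
    H.unionOfSuns_of_everyP4SpansK4MinusEdge⟩

/-- (Proposition: `k`-good tetrahedron free graphs.)
(i) A `P₄`-free graph is a disjoint union of stars and triangles.
(ii) If the vertices of every copy of `P₄` induce a `K₄`, the graph is a disjoint union of
stars and cliques.
(iii) If the vertices of every copy of `P₄` induce a `K₄` or a `K₄` minus an edge, the
graph is a disjoint union of suns. -/
theorem P4_structure {V : Type*} [Fintype V] (H : SimpleGraph V) :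
    ((¬ ∃ f : Fin 4 ↪ V, IsP4Copy H f) → UnionOfStarsAndTriangles H) ∧
    ((∀ f : Fin 4 ↪ V, IsP4Copy H f → ∀ u v : Fin 4, u ≠ v → H.Adj (f u) (f v)) →
      UnionOfStarsAndCliques H) ∧
    ((∀ f : Fin 4 ↪ V, IsP4Copy H f →
        ∃ a b : Fin 4, ∀ u v : Fin 4, u ≠ v →
          (u = a ∧ v = b) ∨ (u = b ∧ v = a) ∨ H.Adj (f u) (f v)) →
      UnionOfSuns H) :=
  P4_structure_general H
end

section
/- For every k ≥ 4 and all integers n > s ≥ 10^7: s^{s/2} ≤ f_k(n)/f_k(n−s), and f_k(n)/f_k(n−1) ≤ n². -/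
open SimpleGraph

/-!
Lower bound: next to any graph counted by `f_k(n - s)`, put a star forest with `q = ⌊s/4⌋`
centres and `s - q` leaves. Stars are `k`-suns for every `k`, and different leaf-to-centre maps
give different graphs, so `f_k(n) ≥ q^(s-q) f_k(n - s)`, and `q^(s-q) ≥ (s/5)^(3s/4) ≥ s^(s/2)`
as soon as `s ≥ 125`.

Upper bound: a connected `k`-sun is a sun, i.e. a clique body completely joined to an
independent side. So once a vertex `v` is deleted, its neighbourhood is pinned down by two
vertex choices: it is the component of a body vertex, that component minus the one other
side vertex, or the set of vertices dominating that component. The exception is a star centre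
`v` whose leaves become isolated; swapping `v` with one of its leaves first makes `v` a leaf.
This injects the graphs on `n` vertices into `n²` copies of those on `n - 1` vertices.
-/

namespace SimpleGraph

variable {V : Type*} {G : SimpleGraph V}

theorem Reachable.mem_of_adj_closed {S : Set V} (hS : ∀ ⦃x y⦄, x ∈ S → G.Adj x y → y ∈ S)
    {u v : V} (h : G.Reachable u v) (hu : u ∈ S) : v ∈ S := by
  obtain ⟨p⟩ := h
  induction p with
  | nil => exact hu
  | cons hadj _ ih => exact ih (hS hu hadj)

theorem ConnectedComponent.supp_subset_of_adj_closed {S : Set V}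
    (hS : ∀ ⦃x y⦄, x ∈ S → G.Adj x y → y ∈ S) {x : V} (hx : x ∈ S) :
    (G.connectedComponentMk x).supp ⊆ S :=
  fun _ hy => (ConnectedComponent.exact hy).symm.mem_of_adj_closed hS hx

theorem Preconnected.adj_of_forall_adj_adj (hG : G.Preconnected) {c : V}
    (hleaf : ∀ a b, G.Adj c a → G.Adj a b → b = c) {x : V} (hx : x ≠ c) : G.Adj c x := by
  refine ((hG c x).mem_of_adj_closed (S := {y | y = c ∨ G.Adj c y}) ?_ (.inl rfl)).resolve_left hx
  rintro y z (rfl | hy) hyz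
  · exact .inr hyz
  · exact .inl (hleaf y z hy hyz)

theorem eq_of_comap_some_eq {H H' : SimpleGraph (Option V)} (h : H.comap some = H'.comap some)
    (hnone : ∀ x, H.Adj none (some x) ↔ H'.Adj none (some x)) : H = H' := by
  ext u v
  rcases u with _ | x <;> rcases v with _ | y
  · simp
  · exact hnone y
  · rw [adj_comm H, adj_comm H']
    exact hnone x
  · exact Iff.of_eq (congrArg (·.Adj x y) h)

def dominatingSet (G : SimpleGraph V) (a : V) : Set V :=
  {x ∈ (G.connectedComponentMk a).supp |
    ∀ y ∈ (G.connectedComponentMk a).supp, y ≠ x → G.Adj x y}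

def starForest {α β : Type*} (f : β → α) : SimpleGraph (α ⊕ β) :=
  .fromRel fun x y => ∃ b, x = .inr b ∧ y = .inl (f b)

theorem starForest_adj_inl_inr {α β : Type*} {f : β → α} {a : α} {b : β} :
    (starForest f).Adj (.inl a) (.inr b) ↔ f b = a := by
  simp [starForest, eq_comm]

end SimpleGraph

section KSuns

variable {V W : Type*} {G : SimpleGraph V} {H : SimpleGraph W} {k : ℕ}

theorem IsStarGraph.of_embedding (f : G ↪g H) (h : IsStarGraph H) : IsStarGraph G := by
  rintro _ ⟨a, b, hab, ha, hb⟩ _ ⟨a', b', hab', ha', hb'⟩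
  exact f.injective <| h ⟨f a, f b, f.injective.ne hab, f.map_adj_iff.2 ha, f.map_adj_iff.2 hb⟩
    ⟨f a', f b', f.injective.ne hab', f.map_adj_iff.2 ha', f.map_adj_iff.2 hb'⟩

theorem IsCliqueGraph.of_embedding (f : G ↪g H) (h : IsCliqueGraph H) : IsCliqueGraph G :=
  fun _ _ huv => f.map_adj_iff.1 (h _ _ (f.injective.ne huv))

theorem IsSunGraph.of_embedding (f : G ↪g H) (h : IsSunGraph H) : IsSunGraph G := by
  obtain ⟨B, hB⟩ := h
  exact ⟨f ⁻¹' B, fun u v => by rw [← f.map_adj_iff, hB, f.injective.ne_iff]; rfl⟩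

theorem IsTriangleGraph.isStarGraph_or_of_embedding (f : G ↪g H) (h : IsTriangleGraph H) :
    IsStarGraph G ∨ IsTriangleGraph G := by
  obtain ⟨hcard, hclique⟩ := h
  have : Finite W := Nat.finite_of_card_ne_zero (by omega)
  have : Finite V := .of_injective f f.injective
  have : Fintype V := .ofFinite V
  by_cases h3 : Nat.card V = 3
  · exact .inr ⟨h3, hclique.of_embedding f⟩
  · refine .inl fun u ⟨a, b, hab, ha, hb⟩ => absurd ?_ h3
    have hle := hcard ▸ Nat.card_le_card_of_injective f f.injective
    have hlt : 2 < Fintype.card V := Fintype.two_lt_card_iff.2 ⟨u, a, b, ha.ne, hb.ne, hab⟩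
    rw [Nat.card_eq_fintype_card] at hle ⊢
    omega

theorem IsKSun.of_embedding (f : G ↪g H) (h : IsKSun k H) : IsKSun k G := by
  unfold IsKSun at *
  split_ifs at *
  · exact h.of_embedding f
  · exact h.imp (·.of_embedding f) (·.of_embedding f)
  · exact h.elim (.inl <| ·.of_embedding f) (·.isStarGraph_or_of_embedding f)

theorem UnionOfKSuns.isKSun_of_embedding (hH : UnionOfKSuns k H) (f : G ↪g H)
    (hG : G.Connected) : IsKSun k G := by
  obtain ⟨v⟩ := hG.nonempty
  exact (hH (H.connectedComponentMk (f v))).of_embedding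
    { toFun := fun x => ⟨f x, ConnectedComponent.sound ((hG.preconnected x v).map f.toHom)⟩
      inj' := fun x y h => f.injective (congrArg Subtype.val h)
      map_rel_iff' := f.map_adj_iff }

theorem UnionOfKSuns.of_embedding (hH : UnionOfKSuns k H) (f : G ↪g H) : UnionOfKSuns k G :=
  fun c => hH.isKSun_of_embedding (f.comp (Embedding.induce c.supp)) c.connected_toSimpleGraph

theorem IsKSun.unionOfKSuns (h : IsKSun k G) : UnionOfKSuns k G :=
  fun c => h.of_embedding (Embedding.induce c.supp)

theorem isKSun_of_adj_iff (c : Set V) (hc : c.Subsingleton)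
    (h : ∀ x y, G.Adj x y ↔ x ≠ y ∧ (x ∈ c ∨ y ∈ c)) : IsKSun k G := by
  have hstar : IsStarGraph G := by
    refine hc.anti fun u ⟨a, b, hab, ha, hb⟩ => ?_
    by_contra hu
    simp only [h, hu, false_or] at ha hb
    exact hab (hc ha.2 hb.2)
  have hsun : IsSunGraph G := ⟨cᶜ, fun x y => by rw [h]; simp only [Set.mem_compl_iff]; tauto⟩
  unfold IsKSun
  split_ifs
  exacts [hsun, .inl hstar, .inl hstar]

theorem IsCliqueGraph.isSunGraph (h : IsCliqueGraph G) : IsSunGraph G :=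
  ⟨∅, fun u v => ⟨fun huv => ⟨huv.ne, by simp⟩, fun huv => h u v huv.1⟩⟩

theorem IsStarGraph.isSunGraph (h : IsStarGraph G) (hG : G.Preconnected) : IsSunGraph G := by
  by_cases hub : ∃ c a b, a ≠ b ∧ G.Adj c a ∧ G.Adj c b
  · obtain ⟨c, hc⟩ := hub
    have hdom : ∀ x, x ≠ c → G.Adj c x := fun x => hG.adj_of_forall_adj_adj fun a b hca hab => by
      by_contra hbc
      exact hca.ne (h hc ⟨c, b, Ne.symm hbc, hca.symm, hab⟩)
    refine ⟨{c}ᶜ, fun u v => ⟨fun huv => ⟨huv.ne, fun ⟨hu, hv⟩ => hu ?_⟩, fun ⟨huv, hcv⟩ => ?_⟩⟩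
    · exact h ⟨c, v, Ne.symm hv, (hdom u hu).symm, huv⟩ hc
    · simp only [Set.mem_compl_iff, Set.mem_singleton_iff, not_and, not_not] at hcv
      by_cases hu : u = c
      · subst hu
        exact hdom v (Ne.symm huv)
      · rw [hcv hu]
        exact (hdom u hu).symm
  · push Not at hub
    refine IsCliqueGraph.isSunGraph fun u v huv =>
      hG.adj_of_forall_adj_adj (fun a b hua hab => ?_) huv.symm
    by_contra hbu
    exact hub a u b (Ne.symm hbu) hua.symm hab

theorem IsKSun.isSunGraph (h : IsKSun k G) (hG : G.Preconnected) : IsSunGraph G := by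
  unfold IsKSun at h
  split_ifs at h
  · exact h
  · exact h.elim (·.isSunGraph hG) (·.isSunGraph)
  · exact h.elim (·.isSunGraph hG) (·.2.isSunGraph)

theorem UnionOfKSuns.exists_side (hH : UnionOfKSuns k H) (c : H.ConnectedComponent) :
    ∃ B : Set W, ∀ u ∈ c.supp, ∀ v ∈ c.supp, H.Adj u v ↔ u ≠ v ∧ ¬(u ∈ B ∧ v ∈ B) := by
  obtain ⟨B, hB⟩ := (hH c).isSunGraph c.connected_toSimpleGraph.preconnected
  refine ⟨Subtype.val '' B, fun u hu v hv => ?_⟩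
  have := hB ⟨u, hu⟩ ⟨v, hv⟩
  rw [← Subtype.val_injective.mem_set_image, ← Subtype.val_injective.mem_set_image] at this
  simpa [Subtype.ext_iff] using this

theorem UnionOfKSuns.isKSun_of_closed_embedding (hG : UnionOfKSuns k G) (e : G ↪g H)
    (he : ∀ ⦃x y⦄, x ∈ Set.range e → H.Adj x y → y ∈ Set.range e) (v : V) :
    IsKSun k (H.induce (H.connectedComponentMk (e v)).supp) :=
  hG.isKSun_of_embedding
    (e.isoInduceRange.symm.toEmbedding.comp
      (H.induceHomOfLE (ConnectedComponent.supp_subset_of_adj_closed he ⟨v, rfl⟩)))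
    (ConnectedComponent.connected_toSimpleGraph _)

theorem UnionOfKSuns.sum (hG : UnionOfKSuns k G) (hH : UnionOfKSuns k H) :
    UnionOfKSuns k (G ⊕g H) := by
  intro c
  obtain ⟨x | x, rfl⟩ := c.exists_rep
  · refine hG.isKSun_of_closed_embedding Embedding.sumInl ?_ x
    rintro _ (y | y) ⟨a, rfl⟩ hy
    · exact ⟨y, rfl⟩
    · simp at hy
  · refine hH.isKSun_of_closed_embedding Embedding.sumInr ?_ x
    rintro _ (y | y) ⟨a, rfl⟩ hy
    · simp at hy
    · exact ⟨y, rfl⟩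

theorem unionOfKSuns_starForest {α β : Type*} (f : β → α) : UnionOfKSuns k (starForest f) := by
  intro c
  obtain ⟨x, rfl⟩ := c.exists_rep
  have hroot := ConnectedComponent.supp_subset_of_adj_closed
    (S := {y | Sum.elim id f y = Sum.elim id f x}) (G := starForest f) ?_ rfl
  · refine isKSun_of_adj_iff (Subtype.val ⁻¹' {.inl (Sum.elim id f x)})
      (fun y hy z hz => Subtype.ext (hy.trans hz.symm)) fun ⟨y, hy⟩ ⟨z, hz⟩ => ?_
    have hy' := hroot hy
    have hz' := hroot hz
    clear hroot
    simp only [comap_adj, Function.Embedding.subtype_apply, Set.mem_preimage,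
      Set.mem_singleton_iff, ne_eq, Subtype.mk.injEq]
    rcases y with a | b <;> rcases z with a' | b' <;> simp_all [starForest, eq_comm]
  · rintro (a | b) (a' | b') h hadj <;> simp_all [starForest, eq_comm]

end KSuns

section Encoding

variable {V : Type*} {H : SimpleGraph (Option V)}

theorem mem_supp_comap_some_iff {C : H.ConnectedComponent} {B : Set (Option V)}
    (hsun : ∀ u ∈ C.supp, ∀ v ∈ C.supp, H.Adj u v ↔ u ≠ v ∧ ¬(u ∈ B ∧ v ∈ B))
    {a : V} (haC : some a ∈ C.supp) (haB : some a ∉ B) (x : V) :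
    x ∈ ((H.comap some).connectedComponentMk a).supp ↔ some x ∈ C.supp := by
  constructor
  · intro hx
    rw [← haC]
    exact ConnectedComponent.sound
      ((ConnectedComponent.exact hx).map (Embedding.comap .some H).toHom)
  · intro hxC
    by_cases hxa : x = a
    · exact hxa ▸ rfl
    · exact ConnectedComponent.sound (show (H.comap some).Adj x a from
        (hsun _ hxC _ haC).2 ⟨by simpa using hxa, fun h => haB h.2⟩).reachable

variable [DecidableEq V]

def decodeNbhd (G : SimpleGraph V) : Option V → Option V → Set V
  | none, none => ∅
  | some a, none => (G.connectedComponentMk a).supp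
  | none, some a => G.dominatingSet a
  | some a, some b => if a = b then {a} else (G.connectedComponentMk a).supp \ {b}

def twist (i j : Option V) : Equiv.Perm (Option V) :=
  if i = j then Equiv.swap none i else 1

/-- The code `(i, j)` and the graph `(H.comap (twist i j)).comap some` on `V` determine `H`.
The diagonal code `(some m, some m)` serves when `none` is a star centre with leaf `m`: swapping
`none` and `m` turns `none` into a leaf whose neighbourhood is `{m}`. -/
def Encodes (H : SimpleGraph (Option V)) (i j : Option V) : Prop :=
  ∀ x, (H.comap (twist i j)).Adj none (some x) ↔
    x ∈ decodeNbhd ((H.comap (twist i j)).comap some) i j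

theorem encodes_of_ne {i j : Option V} (hij : i ≠ j)
    (h : ∀ x, H.Adj none (some x) ↔ x ∈ decodeNbhd (H.comap some) i j) : Encodes H i j := by
  simpa [Encodes, twist, hij] using h

theorem encodes_none_none (h : ∀ x, ¬H.Adj none (some x)) : Encodes H none none := by
  simpa [Encodes, twist, decodeNbhd] using h

theorem encodes_of_isLeaf {m : V} (hm : H.Adj none (some m))
    (hleaf : ∀ x, ¬H.Adj (some m) (some x)) : Encodes H (some m) (some m) := by
  intro x
  by_cases hx : x = m
  · subst hx
    simpa [twist, decodeNbhd] using hm.symm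
  · simp [twist, decodeNbhd, hx, Equiv.swap_apply_of_ne_of_ne, hleaf]

theorem exists_encodes_of_side {C : H.ConnectedComponent} {B : Set (Option V)}
    (hsun : ∀ u ∈ C.supp, ∀ v ∈ C.supp, H.Adj u v ↔ u ≠ v ∧ ¬(u ∈ B ∧ v ∈ B))
    (hN : ∀ x, H.Adj none (some x) ↔ some x ∈ C.supp ∧ some x ∉ B)
    {a : V} (haC : some a ∈ C.supp) (haB : some a ∉ B) : ∃ i j, Encodes H i j := by
  have hcomp := mem_supp_comap_some_iff hsun haC haB
  by_cases huniq : ∃! b, some b ∈ C.supp ∧ some b ∈ B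
  · obtain ⟨b, ⟨hbC, hbB⟩, hb⟩ := huniq
    have hab : a ≠ b := by rintro rfl; exact haB hbB
    refine ⟨some a, some b, encodes_of_ne (by simpa using hab) fun x => ?_⟩
    simp only [decodeNbhd, if_neg hab, Set.mem_sdiff, hcomp, hN, Set.mem_singleton_iff]
    exact and_congr_right fun hxC => ⟨fun hxB hxb => hxB (hxb ▸ hbB),
      fun hxb hxB => hxb (hb x ⟨hxC, hxB⟩)⟩
  · refine ⟨none, some a, encodes_of_ne (by simp) fun x => ?_⟩
    simp only [decodeNbhd, dominatingSet, Set.mem_ofPred_eq, hcomp, hN, comap_adj]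
    refine and_congr_right fun hxC => ⟨fun hxB y hyC hyx => ?_, fun hdom hxB => huniq ?_⟩
    · exact (hsun _ hxC _ hyC).2 ⟨by simpa using hyx.symm, fun h => hxB h.1⟩
    · refine ⟨x, ⟨hxC, hxB⟩, fun y ⟨hyC, hyB⟩ => ?_⟩
      by_contra hyx
      exact ((hsun _ hxC _ hyC).1 (hdom y hyC hyx)).2 ⟨hxB, hyB⟩

theorem UnionOfKSuns.exists_encodes {k : ℕ} (hH : UnionOfKSuns k H) : ∃ i j, Encodes H i j := by
  set C := H.connectedComponentMk none
  obtain ⟨B, hsun⟩ := hH.exists_side C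
  have hnone : none ∈ C.supp := rfl
  have hN : ∀ x, H.Adj none (some x) ↔ some x ∈ C.supp ∧ ¬(none ∈ B ∧ some x ∈ B) := by
    refine fun x => ⟨fun h => ?_, fun ⟨hx, h⟩ => (hsun _ hnone _ hx).2 ⟨by simp, h⟩⟩
    have hx := C.mem_supp_of_adj_mem_supp hnone h
    exact ⟨hx, ((hsun _ hnone _ hx).1 h).2⟩
  by_cases hbody : ∃ a, some a ∈ C.supp ∧ some a ∉ B
  · obtain ⟨a, haC, haB⟩ := hbody
    by_cases hv : none ∈ B
    · exact exists_encodes_of_side hsun (by simpa [hv] using hN) haC haB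
    · refine ⟨some a, none, encodes_of_ne (by simp) fun x => ?_⟩
      simp [decodeNbhd, mem_supp_comap_some_iff hsun haC haB, hN, hv]
  · push Not at hbody
    -- `C` is a star centred at `none`, or `C = {none}`
    by_cases hleaf : none ∉ B ∧ ∃ m, some m ∈ C.supp
    · obtain ⟨hv, m, hmC⟩ := hleaf
      refine ⟨some m, some m, encodes_of_isLeaf ((hN m).2 ⟨hmC, fun h => hv h.1⟩) fun x hx => ?_⟩
      have hxC := C.mem_supp_of_adj_mem_supp hmC hx
      exact ((hsun _ hmC _ hxC).1 hx).2 ⟨hbody m hmC, hbody x hxC⟩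
    · refine ⟨none, none, encodes_none_none fun x hx => hleaf ?_⟩
      obtain ⟨hxC, hxB⟩ := (hN x).1 hx
      exact ⟨fun hv => hxB ⟨hv, hbody x hxC⟩, x, hxC⟩

end Encoding

abbrev KSunUnion (k : ℕ) (V : Type*) := {H : SimpleGraph V // UnionOfKSuns k H}

section Counting

variable {V W : Type*}

theorem fk_eq_card (k n : ℕ) : fk k n = Nat.card (KSunUnion k (Fin n)) :=
  Nat.card_congr ((compl_involutive.toPerm _).subtypeEquiv fun _ => Iff.rfl)

theorem card_kSunUnion_congr (k : ℕ) (e : V ≃ W) :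
    Nat.card (KSunUnion k V) = Nat.card (KSunUnion k W) :=
  Nat.card_congr <| e.simpleGraph.subtypeEquiv fun G =>
    ⟨fun h => h.of_embedding (Iso.comap e.symm G).toEmbedding,
      fun h => h.of_embedding (Iso.comap e.symm G).symm.toEmbedding⟩

theorem card_kSunUnion_pos [Finite V] (k : ℕ) : 0 < Nat.card (KSunUnion k V) :=
  have : Nonempty (KSunUnion k V) :=
    ⟨⊥, (isKSun_of_adj_iff ∅ Set.subsingleton_empty fun _ _ => by simp).unionOfKSuns⟩
  Nat.card_pos

theorem card_kSunUnion_mul_pow_le {α β : Type*} [Finite V] [Finite α] [Finite β] (k : ℕ) :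
    Nat.card (KSunUnion k V) * Nat.card α ^ Nat.card β ≤
      Nat.card (KSunUnion k (V ⊕ (α ⊕ β))) := by
  let F : KSunUnion k V × (β → α) → KSunUnion k (V ⊕ (α ⊕ β)) := fun p =>
    ⟨p.1.1 ⊕g starForest p.2, p.1.2.sum (unionOfKSuns_starForest p.2)⟩
  have hF : F.Injective := by
    rintro ⟨⟨G₁, _⟩, f₁⟩ ⟨⟨G₂, _⟩, f₂⟩ h
    have h' : G₁ ⊕g starForest f₁ = G₂ ⊕g starForest f₂ := congrArg Subtype.val h
    obtain rfl : G₁ = G₂ := by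
      ext a b
      simpa using congrArg (·.Adj (.inl a) (.inl b)) h'
    obtain rfl : f₁ = f₂ := by
      funext b
      have := congrArg (·.Adj (.inr (.inl (f₁ b))) (.inr (.inr b))) h'
      simp only [sum_adj_inr, starForest_adj_inl_inr, eq_iff_iff, true_iff] at this
      exact this.symm
    rfl
  calc Nat.card (KSunUnion k V) * Nat.card α ^ Nat.card β
      = Nat.card (KSunUnion k V × (β → α)) := by rw [Nat.card_prod, Nat.card_fun]
    _ ≤ _ := Nat.card_le_card_of_injective F hF

theorem card_kSunUnion_option_le [Finite V] [DecidableEq V] (k : ℕ) :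
    Nat.card (KSunUnion k (Option V)) ≤ Nat.card (KSunUnion k V) * (Nat.card V + 1) ^ 2 := by
  choose i j hij using fun H : KSunUnion k (Option V) => H.2.exists_encodes
  let F : KSunUnion k (Option V) → KSunUnion k V × Option V × Option V := fun H =>
    (⟨(H.1.comap (twist (i H) (j H))).comap some, H.2.of_embedding
      ((Iso.comap _ _).toEmbedding.comp (Embedding.comap .some _))⟩, i H, j H)
  have hF : F.Injective := by
    intro H₁ H₂ h
    simp only [F, Prod.mk.injEq, Subtype.mk.injEq] at h
    obtain ⟨hG, hi, hj⟩ := h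
    have := eq_of_comap_some_eq hG fun x => by rw [hij H₁ x, hij H₂ x, hG, hi, hj]
    rw [hi, hj] at this
    exact Subtype.ext ((twist (i H₂) (j H₂)).symm.simpleGraph.injective (by simpa using this))
  calc Nat.card (KSunUnion k (Option V))
      ≤ Nat.card (KSunUnion k V × Option V × Option V) := Nat.card_le_card_of_injective F hF
    _ = _ := by rw [Nat.card_prod, Nat.card_prod, Finite.card_option]; ring

end Counting

theorem fk_succ_le (k m : ℕ) : fk k (m + 1) ≤ (m + 1) ^ 2 * fk k m := by
  rw [fk_eq_card, fk_eq_card, card_kSunUnion_congr k (finSuccEquiv m), mul_comm]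
  simpa using card_kSunUnion_option_le (V := Fin m) k

theorem fk_mul_pow_le (k m c L : ℕ) : fk k m * c ^ L ≤ fk k (m + c + L) := by
  rw [fk_eq_card, fk_eq_card,
    ← card_kSunUnion_congr k ((Equiv.sumAssoc _ _ _).symm.trans
      ((finSumFinEquiv.sumCongr (.refl _)).trans finSumFinEquiv))]
  simpa using card_kSunUnion_mul_pow_le (V := Fin m) (α := Fin c) (β := Fin L) k

theorem rpow_self_half_le_pow_quarter (s : ℕ) (hs : 125 ≤ s) :
    (s : ℝ) ^ ((s : ℝ) / 2) ≤ ((s / 4 : ℕ) : ℝ) ^ (s - s / 4) := by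
  have hs' : (125 : ℝ) ≤ s := by exact_mod_cast hs
  have hq : (s : ℝ) / 5 ≤ (s / 4 : ℕ) := by
    rw [div_le_iff₀ (by norm_num)]
    exact_mod_cast (by omega : s ≤ s / 4 * 5)
  have hq1 : (1 : ℝ) ≤ (s / 4 : ℕ) := by exact_mod_cast (by omega : 1 ≤ s / 4)
  have hL : 3 * (s : ℝ) / 4 ≤ ((s - s / 4 : ℕ) : ℝ) := by
    rw [div_le_iff₀ (by norm_num)]
    exact_mod_cast (by omega : 3 * s ≤ (s - s / 4) * 4)
  calc (s : ℝ) ^ ((s : ℝ) / 2) = ((s : ℝ) ^ 2) ^ ((s : ℝ) / 4) := by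
        rw [← Real.rpow_natCast, ← Real.rpow_mul (by positivity)]; ring_nf
    _ ≤ (((s : ℝ) / 5) ^ 3) ^ ((s : ℝ) / 4) := by
        gcongr
        nlinarith [mul_nonneg (sq_nonneg (s : ℝ)) (sub_nonneg.2 hs')]
    _ = ((s : ℝ) / 5) ^ (3 * (s : ℝ) / 4) := by
        rw [← Real.rpow_natCast, ← Real.rpow_mul (by positivity)]; ring_nf
    _ ≤ ((s / 4 : ℕ) : ℝ) ^ (3 * (s : ℝ) / 4) := by gcongr
    _ ≤ ((s / 4 : ℕ) : ℝ) ^ ((s - s / 4 : ℕ) : ℝ) := Real.rpow_le_rpow_of_exponent_le hq1 hL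
    _ = ((s / 4 : ℕ) : ℝ) ^ (s - s / 4) := Real.rpow_natCast _ _

theorem fk_estimate_two_general (k : ℕ) (n s : ℕ) (hs : 10 ^ 7 ≤ s) (hn : s < n) :
    (s : ℝ) ^ ((s : ℝ) / 2) ≤ (fk k n : ℝ) / (fk k (n - s) : ℝ) ∧
    (fk k n : ℝ) / (fk k (n - 1) : ℝ) ≤ (n : ℝ) ^ 2 := by
  have hpos (m : ℕ) : (0 : ℝ) < fk k m := by
    rw [fk_eq_card]
    exact_mod_cast card_kSunUnion_pos k
  constructor
  · rw [le_div_iff₀ (hpos _)]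
    calc (s : ℝ) ^ ((s : ℝ) / 2) * fk k (n - s)
        ≤ ((s / 4 : ℕ) : ℝ) ^ (s - s / 4) * fk k (n - s) := by
          gcongr
          exact rpow_self_half_le_pow_quarter s (le_trans (by norm_num) hs)
      _ ≤ fk k n := by
          have := fk_mul_pow_le k (n - s) (s / 4) (s - s / 4)
          rw [show n - s + s / 4 + (s - s / 4) = n by omega] at this
          rw [mul_comm]
          exact_mod_cast this
  · obtain ⟨m, rfl⟩ : ∃ m, n = m + 1 := ⟨n - 1, by omega⟩
    rw [div_le_iff₀ (hpos _), Nat.add_sub_cancel]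
    exact_mod_cast fk_succ_le k m

/-- (Lemma `f`-estimate 2.) For `k ≥ 4` and `n > s ≥ 10⁷`:
`s^{s/2} ≤ f_k(n)/f_k(n−s)` and `f_k(n)/f_k(n−1) ≤ n²`. -/
theorem fk_estimate_two (k : ℕ) (hk : 4 ≤ k) (n s : ℕ) (hs : 10 ^ 7 ≤ s) (hn : s < n) :
    (s : ℝ) ^ ((s : ℝ) / 2) ≤ (fk k n : ℝ) / (fk k (n - s) : ℝ) ∧
    (fk k n : ℝ) / (fk k (n - 1) : ℝ) ≤ (n : ℝ) ^ 2 :=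
  fk_estimate_two_general k n s hs hn
end

section
/- Let k, n ∈ ℕ with n ≥ k ≥ 2 and let 0 < s < n. (i) If G is a k-partite graph on n vertices, with vertex classes V_1, …, V_k, in which some vertex class A ∈ {V_1,…,V_k} satisfies ||A| − n/k| ≥ s, then e(G) ≤ t_k(n) − s(s/2 − k). (ii) t_{k−1}(n) ≥ t_{k−1}(n−s) + s·n·(k−2)/(k−1) − s(k−2) − t_{k−1}(s). -/
/-!
A vertex of a `k`-partite graph has no neighbour in its own class, so summing degrees gives
`2 e(G) + ∑ aᵢ² ≤ n²` for the class sizes `aᵢ`. Cauchy–Schwarz on the `k - 1` classes other than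
the unbalanced one (of size `a`) gives `(k - 1) (k ∑ aᵢ² - n²) ≥ (k a - n)² ≥ k² s²`.
Both parts then come from the exact count `2 r t_r(n) + ρ (r - ρ) = (r - 1) n²`, `ρ = n % r`
(induction on `n` in steps of `r`), which, as `0 ≤ ρ (r - ρ) ≤ r (r - 1)`, determines `t_r(n)`
up to an error of `(r - 1) / 2`.
-/

open SimpleGraph

open Finset

theorem Nat.two_mul_choose_two (n : ℕ) : 2 * n.choose 2 = n * (n - 1) := by
  rw [Nat.choose_two_right, Nat.mul_div_cancel' (Nat.even_mul_pred_self n).two_dvd]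

theorem sq_card_mul_sub_sum_le {ι : Type*} [Fintype ι] [DecidableEq ι] (a : ι → ℝ) (i : ι) :
    (Fintype.card ι * a i - ∑ j, a j) ^ 2
      ≤ (Fintype.card ι - 1) * (Fintype.card ι * ∑ j, a j ^ 2 - (∑ j, a j) ^ 2) := by
  have hcs := sq_sum_le_card_mul_sum_sq (s := univ.erase i) (f := a)
  rw [card_erase_of_mem (mem_univ i), card_univ,
    Nat.cast_sub (Fintype.card_pos_iff.2 ⟨i⟩), Nat.cast_one] at hcs
  rw [← add_sum_erase _ _ (mem_univ i), ← add_sum_erase _ (fun j => a j ^ 2) (mem_univ i)]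
  nlinarith [hcs]

namespace SimpleGraph

theorem card_edgeFinset_turanGraph_of_lt {n r : ℕ} (h : n < r) :
    #(turanGraph n r).edgeFinset = n.choose 2 := by
  convert card_edgeFinset_top_eq_card_choose_two (V := Fin n) using 3
  · exact turanGraph_eq_top.2 (.inr h.le)
  · simp

theorem two_mul_card_edgeFinset_turanGraph_add (n r : ℕ) :
    2 * r * #(turanGraph n r).edgeFinset + n % r * (r - n % r) = (r - 1) * n ^ 2 := by
  obtain rfl | hr := r.eq_zero_or_pos
  · simp
  induction n using Nat.strong_induction_on with
  | _ n ih =>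
  obtain hnr | hrn := lt_or_ge n r
  · rw [card_edgeFinset_turanGraph_of_lt hnr, Nat.mod_eq_of_lt hnr]
    have h2 := Nat.two_mul_choose_two n
    obtain _ | n := n
    · simp
    · rw [Nat.add_sub_cancel] at h2
      zify [hnr.le, hr] at h2 ⊢
      linear_combination (r : ℤ) * h2
  · obtain ⟨m, rfl⟩ := Nat.exists_eq_add_of_le' hrn
    have ihm := ih m (by omega)
    rw [card_edgeFinset_turanGraph_add, Nat.add_mod_right]
    have h2 := Nat.two_mul_choose_two r
    have hmod : m % r ≤ r := (Nat.mod_lt _ hr).le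
    zify [hr, hmod] at ihm h2 ⊢
    linear_combination ihm + (r : ℤ) * h2

end SimpleGraph

theorem turanEdges_eq_card_edgeFinset (m n : ℕ) :
    turanEdges m n = #(turanGraph n m).edgeFinset := by
  rw [turanEdges, Nat.card_eq_fintype_card, edgeFinset_card]

theorem two_mul_turanEdges_add {m : ℕ} (hm : 0 < m) (n : ℕ) :
    2 * m * (turanEdges m n : ℝ) + (n % m : ℕ) * (m - (n % m : ℕ)) = (m - 1) * n ^ 2 := by
  have h := two_mul_card_edgeFinset_turanGraph_add n m
  rw [← turanEdges_eq_card_edgeFinset] at h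
  have hmod : n % m ≤ m := (Nat.mod_lt n hm).le
  rify [hm, hmod] at h
  exact h

theorem two_mul_turanEdges_le {m : ℕ} (hm : 0 < m) (n : ℕ) :
    2 * m * (turanEdges m n : ℝ) ≤ (m - 1) * n ^ 2 := by
  have hρ : ((n % m : ℕ) : ℝ) ≤ m := by exact_mod_cast (Nat.mod_lt n hm).le
  nlinarith [two_mul_turanEdges_add hm n, (n % m).cast_nonneg (α := ℝ)]

theorem sub_le_two_mul_turanEdges {m : ℕ} (hm : 0 < m) (n : ℕ) :
    (m - 1) * n ^ 2 - m * (m - 1) ≤ 2 * m * (turanEdges m n : ℝ) := by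
  have hρ : ((n % m : ℕ) : ℝ) + 1 ≤ m := by exact_mod_cast Nat.mod_lt n hm
  nlinarith [two_mul_turanEdges_add hm n, (n % m).cast_nonneg (α := ℝ)]

theorem turanEdges_sub_add_le {m n s : ℕ} (hm : 0 < m) (hs : 0 < s) (hsn : s ≤ n) :
    (turanEdges m (n - s) : ℝ) + s * n * (m - 1) / m - s * (m - 1) - turanEdges m s
      ≤ turanEdges m n := by
  have hm' : (1 : ℝ) ≤ m := by exact_mod_cast hm
  have hs' : (1 : ℝ) ≤ s := by exact_mod_cast hs
  have hn := sub_le_two_mul_turanEdges hm n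
  have hns := two_mul_turanEdges_le hm (n - s)
  have hs := sub_le_two_mul_turanEdges hm s
  rw [Nat.cast_sub hsn] at hns
  rw [← mul_le_mul_iff_right₀ (by positivity : (0 : ℝ) < 2 * m)]
  have hdiv : 2 * m * (s * n * (m - 1) / m : ℝ) = 2 * s * n * (m - 1) := by field_simp
  nlinarith [mul_le_mul_of_nonneg_left hs' (by nlinarith : (0 : ℝ) ≤ m * (m - 1))]

namespace SimpleGraph.Coloring

variable {V ι : Type*} [Fintype V] [Fintype ι] [DecidableEq ι] {G : SimpleGraph V}

theorem sum_card_fiber (C : G.Coloring ι) : ∑ i, #{v | C v = i} = Fintype.card V :=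
  (card_eq_sum_card_fiberwise fun _ _ => mem_univ _).symm

theorem two_mul_card_edgeFinset_add_sum_sq_le [DecidableRel G.Adj] (C : G.Coloring ι) :
    2 * #G.edgeFinset + ∑ i, #{v | C v = i} ^ 2 ≤ Fintype.card V ^ 2 := by
  classical
  have hdeg (v : V) : G.degree v + #{w | C w = C v} ≤ Fintype.card V := by
    rw [← card_neighborFinset_eq_degree, ← card_union_of_disjoint]
    · exact card_le_univ _
    · exact Finset.disjoint_left.2 fun _ hw hCw =>
        C.valid ((mem_neighborFinset _ _ _).1 hw) (mem_filter.1 hCw).2.symm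
  have hclass : ∑ i, #{v | C v = i} ^ 2 = ∑ v, #{w | C w = C v} := by
    rw [← sum_fiberwise' univ C fun i => #{w | C w = i}]
    simp [sq]
  calc 2 * #G.edgeFinset + ∑ i, #{v | C v = i} ^ 2
      = ∑ v, (G.degree v + #{w | C w = C v}) := by
        rw [sum_add_distrib, sum_degrees_eq_twice_card_edges, hclass]
    _ ≤ ∑ _v : V, Fintype.card V := sum_le_sum fun v _ => hdeg v
    _ = Fintype.card V ^ 2 := by simp [sq]

theorem two_mul_mul_card_edgeFinset_add_sq_le [DecidableRel G.Adj] (C : G.Coloring ι) (i : ι) :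
    2 * Fintype.card ι * (Fintype.card ι - 1) * (#G.edgeFinset : ℝ)
        + (Fintype.card ι * #{v | C v = i} - Fintype.card V) ^ 2
      ≤ (Fintype.card ι - 1) ^ 2 * Fintype.card V ^ 2 := by
  set a : ι → ℝ := fun j => #{v | C v = j} with ha
  have hedges : 2 * (#G.edgeFinset : ℝ) + ∑ j, a j ^ 2 ≤ Fintype.card V ^ 2 := by
    simp only [ha]
    exact_mod_cast C.two_mul_card_edgeFinset_add_sum_sq_le
  have hsum : ∑ j, a j = Fintype.card V := by
    simp only [ha]
    exact_mod_cast C.sum_card_fiber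
  have hvar := sq_card_mul_sub_sum_le a i
  rw [hsum] at hvar
  have hc : (1 : ℝ) ≤ Fintype.card ι := by exact_mod_cast Fintype.card_pos_iff.2 ⟨i⟩
  nlinarith [mul_le_mul_of_nonneg_left hedges
    (by nlinarith : (0 : ℝ) ≤ Fintype.card ι * (Fintype.card ι - 1))]

theorem card_edgeFinset_le_turanEdges_sub [DecidableRel G.Adj] {k s : ℕ}
    (C : G.Coloring (Fin k)) (i : Fin k) (hs : 0 < s)
    (hdev : (s : ℝ) ≤ |(#{v | C v = i} : ℝ) - Fintype.card V / k|) :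
    (#G.edgeFinset : ℝ) ≤ turanEdges k (Fintype.card V) - s * (s / 2 - k) := by
  have hsharp := C.two_mul_mul_card_edgeFinset_add_sq_le i
  have hk : 0 < k := Fin.pos i
  have hT := sub_le_two_mul_turanEdges hk (Fintype.card V)
  rw [Fintype.card_fin] at hsharp
  set n := Fintype.card V
  set a : ℝ := (#{v | C v = i} : ℝ)
  have hk' : (0 : ℝ) < k := by exact_mod_cast hk
  have hk1 : (1 : ℝ) ≤ k := by exact_mod_cast hk
  have hs' : (1 : ℝ) ≤ s := by exact_mod_cast hs
  have hdev' : (k * s : ℝ) ^ 2 ≤ (k * a - n) ^ 2 := by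
    have : k * |a - n / k| = |k * a - n| := by
      rw [← abs_of_pos hk', ← abs_mul, abs_of_pos hk', mul_sub, mul_div_cancel₀ _ hk'.ne']
    rw [← sq_abs (k * a - n), ← this]
    gcongr
  have hk2 : (1 : ℝ) < k := by
    by_contra! h
    rw [le_antisymm h hk1] at hsharp hdev'
    nlinarith
  rw [← mul_le_mul_iff_right₀ (by positivity : (0 : ℝ) < 2 * k * (k - 1))]
  -- the rounding error `(k - 1) / 2` in `t_k(n)` is absorbed by the term `s k`
  nlinarith [mul_le_mul_of_nonneg_left hT (by linarith : (0 : ℝ) ≤ k - 1),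
    mul_le_mul_of_nonneg_left (by nlinarith : (k : ℝ) - 1 ≤ 2 * s * k)
      (by positivity : (0 : ℝ) ≤ k * (k - 1))]

end SimpleGraph.Coloring

theorem omitted_calculation_general (k n s : ℕ) (hk : 2 ≤ k)
    (hs1 : 0 < s) (hs2 : s < n) :
    (∀ (G : SimpleGraph (Fin n)) (V : Fin k → Set (Fin n)),
      (∀ x : Fin n, ∃! i, x ∈ V i) →
      (∀ i : Fin k, ∀ u ∈ V i, ∀ v ∈ V i, ¬ G.Adj u v) →
      ∀ i0 : Fin k, (s : ℝ) ≤ |((V i0).ncard : ℝ) - (n : ℝ) / (k : ℝ)| →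
        (Nat.card G.edgeSet : ℝ) ≤
          (turanEdges k n : ℝ) - (s : ℝ) * ((s : ℝ) / 2 - (k : ℝ))) ∧
    ((turanEdges (k - 1) (n - s) : ℝ) +
        (s : ℝ) * (n : ℝ) * ((k : ℝ) - 2) / ((k : ℝ) - 1) -
        (s : ℝ) * ((k : ℝ) - 2) - (turanEdges (k - 1) s : ℝ)
      ≤ (turanEdges (k - 1) n : ℝ)) := by
  refine ⟨fun G V hpart hindep i0 hdev => ?_, ?_⟩
  · classical
    choose c hc using hpart
    let C : G.Coloring (Fin k) :=
      Coloring.mk c fun {u v} huv hcuv => hindep (c u) u (hc u).1 v (hcuv ▸ (hc v).1) huv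
    have hV (i : Fin k) : V i = ({x | C x = i} : Finset (Fin n)) := by
      ext x
      simpa [C] using ⟨fun hx => ((hc x).2 i hx).symm, fun hx => hx ▸ (hc x).1⟩
    rw [hV, Set.ncard_coe_finset] at hdev
    rw [Nat.card_eq_fintype_card, ← edgeFinset_card]
    simpa using C.card_edgeFinset_le_turanEdges_sub i0 hs1 (by simpa using hdev)
  · have hcast : ((k - 1 : ℕ) : ℝ) = k - 1 := by rw [Nat.cast_sub (by omega), Nat.cast_one]
    have h := turanEdges_sub_add_le (m := k - 1) (by omega) hs1 hs2.le
    rw [hcast] at h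
    convert h using 4 <;> ring

/-- (Proposition: omitted calculation.) Let `n ≥ k ≥ 2`, `0 < s < n`.
(i) If `G` is a `k`-partite graph on `n` vertices in which some vertex class `A`
satisfies `||A| − n/k| ≥ s`, then `e(G) ≤ t_k(n) − s(s/2 − k)`.
(ii) `t_{k−1}(n) ≥ t_{k−1}(n−s) + sn(k−2)/(k−1) − s(k−2) − t_{k−1}(s)`. -/
theorem omitted_calculation (k n s : ℕ) (hk : 2 ≤ k) (hn : k ≤ n)
    (hs1 : 0 < s) (hs2 : s < n) :
    (∀ (G : SimpleGraph (Fin n)) (V : Fin k → Set (Fin n)),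
      (∀ x : Fin n, ∃! i, x ∈ V i) →
      (∀ i : Fin k, ∀ u ∈ V i, ∀ v ∈ V i, ¬ G.Adj u v) →
      ∀ i0 : Fin k, (s : ℝ) ≤ |((V i0).ncard : ℝ) - (n : ℝ) / (k : ℝ)| →
        (Nat.card G.edgeSet : ℝ) ≤
          (turanEdges k n : ℝ) - (s : ℝ) * ((s : ℝ) / 2 - (k : ℝ))) ∧
    ((turanEdges (k - 1) (n - s) : ℝ) +
        (s : ℝ) * (n : ℝ) * ((k : ℝ) - 2) / ((k : ℝ) - 1) -
        (s : ℝ) * ((k : ℝ) - 2) - (turanEdges (k - 1) s : ℝ)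
      ≤ (turanEdges (k - 1) n : ℝ)) :=
  omitted_calculation_general k n s hk hs1 hs2
end

section
/- Let k ≥ 6. There exists n_0 ∈ ℕ such that the following holds for every n ≥ n_0. Let Q be a balanced ordered (k−1)-partition of [n] (all class sizes differ by at most one). Then the number of k-templates G on Q such that the complement of G[Q_0] has at most one component with at least two vertices is at most 2^{−n} times the total number of k-templates on Q. -/
open SimpleGraph

/-!
Write `Q₀` for the labelled class and `m = |Q₀|`. A template on `Q` splits into its
restriction to `Q₀` and its edges not inside `Q₀`, and the two parts can be chosen
independently; so it suffices to compare, among graphs `K` on `Q₀` that are disjoint unions of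
stars and triangles, those with at most one nontrivial component against all of them. The former
are determined by the vertex set of that component, a centre and one bit (star or triangle), so
there are at most `2 m 2^m` of them. The latter include every perfect matching between two
disjoint halves of `Q₀`, at least `(m/2)!` graphs. As `Q` is balanced, `n ≤ (k - 1)(m + 1)`,
and `(m/2)!` beats `2^(n + m + 1) m` for large `m`.
-/

open Filter
open scoped Nat

namespace SimpleGraph

variable {V : Type*} {G : SimpleGraph V}

def AtMostOneNontrivialComponent (G : SimpleGraph V) : Prop :=
  {C : G.ConnectedComponent | 2 ≤ Nat.card C.supp}.Subsingleton

lemma exists_forall_eq_of_isStarGraph [Nonempty V] (hG : IsStarGraph G) :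
    ∃ c, ∀ v a b, a ≠ b → G.Adj v a → G.Adj v b → v = c := by
  by_cases h : ∃ v a b, a ≠ b ∧ G.Adj v a ∧ G.Adj v b
  · obtain ⟨c, hc⟩ := h
    exact ⟨c, fun v a b hab ha hb => hG ⟨a, b, hab, ha, hb⟩ hc⟩
  · push Not at h
    exact ⟨Classical.arbitrary V, fun v a b hab ha hb => absurd hb (h v a b hab ha)⟩

lemma Reachable.eq_or_eq_of_forall_adj {a b w : V} (ha : ∀ x, G.Adj a x → x = b)
    (hb : ∀ x, G.Adj b x → x = a) (h : G.Reachable a w) : w = a ∨ w = b := by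
  obtain ⟨p⟩ := h
  suffices ∀ x, G.Walk x w → x = a ∨ x = b → w = a ∨ w = b from this a p (.inl rfl)
  clear p
  intro x q
  induction q with
  | nil => exact id
  | cons hxy _ ih =>
    rintro (rfl | rfl)
    · exact ih (.inr (ha _ hxy))
    · exact ih (.inl (hb _ hxy))

lemma Connected.adj_iff_of_forall_eq (hG : G.Connected) {c : V}
    (hc : ∀ v a b, a ≠ b → G.Adj v a → G.Adj v b → v = c) {u v : V} :
    G.Adj u v ↔ u ≠ v ∧ (u = c ∨ v = c) := by
  have touch : ∀ x y, G.Adj x y → x = c ∨ y = c := by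
    intro x y hxy
    by_contra! h
    have hx : ∀ z, G.Adj x z → z = y :=
      fun z hz => by_contra fun hzy => h.1 (hc x z y hzy hz hxy)
    have hy : ∀ z, G.Adj y z → z = x :=
      fun z hz => by_contra fun hzx => h.2 (hc y z x hzx hz hxy.symm)
    rcases (hG.preconnected x c).eq_or_eq_of_forall_adj hx hy with h' | h'
    · exact h.1 h'.symm
    · exact h.2 h'.symm
  have to_c : ∀ x, x ≠ c → G.Adj x c := by
    intro x hx
    obtain ⟨p⟩ := hG.preconnected x c
    cases p with
    | nil => exact absurd rfl hx
    | cons hxy _ => exact (touch _ _ hxy).resolve_left hx ▸ hxy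
  refine ⟨fun h => ⟨h.ne, touch u v h⟩, ?_⟩
  rintro ⟨huv, rfl | rfl⟩
  · exact (to_c v huv.symm).symm
  · exact to_c u huv

def starOrCliqueOn (S : Set V) (c : V) (b : Bool) : SimpleGraph V where
  Adj u v := u ≠ v ∧ u ∈ S ∧ v ∈ S ∧ (b = true ∨ u = c ∨ v = c)
  symm := ⟨fun _ _ ⟨huv, hu, hv, h⟩ => ⟨huv.symm, hv, hu, by tauto⟩⟩
  loopless := ⟨fun _ h => h.1 rfl⟩

lemma two_le_card_supp_of_adj [Finite V] {u v : V} (h : G.Adj u v) :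
    2 ≤ Nat.card (G.connectedComponentMk u).supp := by
  rw [Nat.card_coe_set_eq, Nat.succ_le_iff, Set.one_lt_ncard]
  exact ⟨u, rfl, v, (ConnectedComponent.connectedComponentMk_eq_of_adj h).symm, h.ne⟩

lemma exists_eq_starOrCliqueOn [Finite V] [Nonempty V] (hG : UnionOfStarsAndTriangles G)
    (h : G.AtMostOneNontrivialComponent) : ∃ S c b, G = starOrCliqueOn S c b := by
  by_cases hE : ∃ x y, G.Adj x y
  · obtain ⟨x, y, hxy⟩ := hE
    set C := G.connectedComponentMk x
    have hC : ∀ u v, G.Adj u v → u ∈ C.supp := fun u v huv =>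
      h (two_le_card_supp_of_adj huv) (two_le_card_supp_of_adj hxy)
    have hCadj : ∀ u v, G.Adj u v ↔
        ∃ (hu : u ∈ C.supp) (hv : v ∈ C.supp), C.toSimpleGraph.Adj ⟨u, hu⟩ ⟨v, hv⟩ :=
      fun u v => ⟨fun huv => ⟨hC u v huv, hC v u huv.symm, huv⟩, fun ⟨_, _, huv⟩ => huv⟩
    rcases hG C with hstar | ⟨-, hclique⟩
    · have : Nonempty C.supp := ⟨⟨x, rfl⟩⟩
      obtain ⟨c, hc⟩ := exists_forall_eq_of_isStarGraph hstar
      refine ⟨C.supp, c, false, ?_⟩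
      ext u v
      rw [hCadj]
      have hCc {a b : C.supp} :=
        C.connected_toSimpleGraph.adj_iff_of_forall_eq hc (u := a) (v := b)
      constructor
      · rintro ⟨hu, hv, huv⟩
        obtain ⟨hne, hcen⟩ := hCc.1 huv
        refine ⟨fun h => hne (Subtype.ext h), hu, hv, .inr ?_⟩
        rcases hcen with rfl | rfl
        exacts [.inl rfl, .inr rfl]
      · rintro ⟨hne, hu, hv, hcen⟩
        refine ⟨hu, hv, hCc.2 ⟨fun h => hne (congrArg Subtype.val h), ?_⟩⟩
        rcases hcen with h | h | h
        exacts [absurd h Bool.false_ne_true, .inl (Subtype.ext h), .inr (Subtype.ext h)]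
    · refine ⟨C.supp, x, true, ?_⟩
      ext u v
      rw [hCadj]
      exact ⟨fun ⟨hu, hv, huv⟩ => ⟨fun h => huv.ne (Subtype.ext h), hu, hv, .inl rfl⟩,
        fun ⟨hne, hu, hv, _⟩ =>
          ⟨hu, hv, hclique _ _ fun h => hne (congrArg Subtype.val h)⟩⟩
  · push Not at hE
    exact ⟨∅, Classical.arbitrary V, false, by ext u v; simp [starOrCliqueOn, hE]⟩

lemma ncard_unionOfStarsAndTriangles_atMostOne_le [Finite V] [Nonempty V] :
    {G : SimpleGraph V | UnionOfStarsAndTriangles G ∧ G.AtMostOneNontrivialComponent}.ncard ≤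
      2 ^ Nat.card V * Nat.card V * 2 := by
  let enc : Set V × V × Bool → SimpleGraph V := fun p => starOrCliqueOn p.1 p.2.1 p.2.2
  have hsub : {G : SimpleGraph V | UnionOfStarsAndTriangles G ∧
      G.AtMostOneNontrivialComponent} ⊆ Set.range enc := by
    rintro G ⟨hG, h⟩
    obtain ⟨S, c, b, rfl⟩ := exists_eq_starOrCliqueOn hG h
    exact ⟨(S, c, b), rfl⟩
  calc _ ≤ (Set.range enc).ncard := Set.ncard_le_ncard hsub
    _ ≤ Nat.card (Set V × V × Bool) := by
      rw [← Nat.card_coe_set_eq]; exact Finite.card_range_le enc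
    _ = 2 ^ Nat.card V * Nat.card V * 2 := by
      have := Fintype.ofFinite V
      simp [Nat.card_eq_fintype_card, Fintype.card_set, mul_assoc]

lemma ncard_setOf_compl (P : SimpleGraph V → Prop) : {G | P Gᶜ}.ncard = {G | P G}.ncard := by
  change (compl ⁻¹' {G | P G}).ncard = _
  rw [Set.preimage_compl_eq_image_compl, Set.ncard_image_of_injective _ compl_injective]

lemma unionOfStarsAndTriangles_of_forall_adj_eq (h : ∀ v a b, G.Adj v a → G.Adj v b → a = b) :
    UnionOfStarsAndTriangles G :=
  fun _ => .inl fun _ ⟨_, _, hab, ha, hb⟩ => absurd (Subtype.ext (h _ _ _ ha hb)) hab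

def matchingOf {α : Type*} (f : α ⊕ α ↪ V) (σ : Equiv.Perm α) : SimpleGraph V :=
  fromRel fun x y => ∃ i, x = f (.inl i) ∧ y = f (.inr (σ i))

lemma matchingOf_adj_eq {α : Type*} (f : α ⊕ α ↪ V) (σ : Equiv.Perm α) {v a b : V}
    (ha : (matchingOf f σ).Adj v a) (hb : (matchingOf f σ).Adj v b) : a = b := by
  simp only [matchingOf, fromRel_adj] at ha hb
  obtain ⟨-, ⟨i, rfl, rfl⟩ | ⟨i, rfl, rfl⟩⟩ := ha <;>
    obtain ⟨-, ⟨j, hj, rfl⟩ | ⟨j, rfl, hj⟩⟩ := hb <;> simp_all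

lemma matchingOf_injective {α : Type*} (f : α ⊕ α ↪ V) :
    Function.Injective (matchingOf f) := by
  intro σ τ h
  ext i
  have hadj : (matchingOf f τ).Adj (f (.inl i)) (f (.inr (σ i))) := by
    rw [← h]
    exact ⟨by simp, .inl ⟨i, rfl, rfl⟩⟩
  simpa [matchingOf] using hadj

lemma factorial_le_ncard_unionOfStarsAndTriangles [Finite V] {t : ℕ} (ht : 2 * t ≤ Nat.card V) :
    t ! ≤ {G : SimpleGraph V | UnionOfStarsAndTriangles G}.ncard := by
  have := Fintype.ofFinite V
  obtain ⟨f⟩ : Nonempty (Fin t ⊕ Fin t ↪ V) :=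
    Function.Embedding.nonempty_of_card_le (by simpa [Nat.card_eq_fintype_card, two_mul] using ht)
  calc t ! = Nat.card (Equiv.Perm (Fin t)) := by simp [Nat.card_eq_fintype_card, Fintype.card_perm]
    _ = (Set.range (matchingOf f)).ncard :=
      (Set.ncard_range_of_injective (matchingOf_injective f)).symm
    _ ≤ _ := Set.ncard_le_ncard (by
        rintro _ ⟨σ, rfl⟩
        exact unionOfStarsAndTriangles_of_forall_adj_eq fun _ _ _ => matchingOf_adj_eq f σ)

section Decomposition

variable {s : Set V}

@[simp] lemma mk_mem_cliqueEdgeSet {u v : V} :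
    s(u, v) ∈ cliqueEdgeSet s ↔ u ≠ v ∧ u ∈ s ∧ v ∈ s := by
  simp [cliqueEdgeSet]

lemma induce_deleteEdges_cliqueEdgeSet_of_disjoint {t : Set V} (h : Disjoint s t) :
    (G.deleteEdges (cliqueEdgeSet s)).induce t = G.induce t := by
  ext ⟨u, hu⟩ ⟨v, hv⟩
  simp [Set.disjoint_right.1 h hu]

lemma induce_deleteEdges_cliqueEdgeSet : (G.deleteEdges (cliqueEdgeSet s)).induce s = ⊥ := by
  ext ⟨u, hu⟩ ⟨v, hv⟩
  simpa [hu, hv] using G.ne_of_adj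

lemma induce_map_subtype_sup (H : SimpleGraph s) {T : SimpleGraph V} (hT : T.induce s = ⊥) :
    (H.map (Function.Embedding.subtype s) ⊔ T).induce s = H := by
  ext ⟨u, hu⟩ ⟨v, hv⟩
  have hTuv : ¬T.Adj u v := eq_bot_iff_forall_not_adj.1 hT ⟨u, hu⟩ ⟨v, hv⟩
  simp only [comap_adj, sup_adj, map_adj, Function.Embedding.subtype_apply, hTuv, or_false]
  exact ⟨fun ⟨_, _, h, hu, hv⟩ => by subst hu hv; exact h, fun h => ⟨_, _, h, rfl, rfl⟩⟩

lemma deleteEdges_map_subtype_sup (H : SimpleGraph s) {T : SimpleGraph V} (hT : T.induce s = ⊥) :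
    (H.map (Function.Embedding.subtype s) ⊔ T).deleteEdges (cliqueEdgeSet s) = T := by
  ext u v
  have hT' := eq_bot_iff_forall_not_adj.1 hT
  simp only [deleteEdges_adj, sup_adj, map_adj, mk_mem_cliqueEdgeSet]
  constructor
  · rintro ⟨⟨⟨u, hu⟩, ⟨v, hv⟩, h, rfl, rfl⟩ | h, hne⟩
    · exact absurd ⟨fun huv => h.ne (Subtype.ext huv), hu, hv⟩ hne
    · exact h
  · exact fun h => ⟨.inr h, fun ⟨_, hu, hv⟩ => hT' ⟨u, hu⟩ ⟨v, hv⟩ h⟩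

lemma map_induce_sup_deleteEdges (G : SimpleGraph V) :
    (G.induce s).map (Function.Embedding.subtype s) ⊔ G.deleteEdges (cliqueEdgeSet s) = G := by
  ext u v
  simp only [deleteEdges_adj, sup_adj, map_adj, comap_adj, mk_mem_cliqueEdgeSet]
  constructor
  · rintro (⟨u, v, h, rfl, rfl⟩ | ⟨h, -⟩) <;> exact h
  · intro h
    by_cases hs : u ∈ s ∧ v ∈ s
    · exact .inl ⟨⟨u, hs.1⟩, ⟨v, hs.2⟩, h, rfl, rfl⟩
    · exact .inr ⟨h, fun ⟨_, hu, hv⟩ => hs ⟨hu, hv⟩⟩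

lemma ncard_setOf_induce_and (P : SimpleGraph s → Prop) {R : SimpleGraph V → Prop}
    (hR : ∀ G, R (G.deleteEdges (cliqueEdgeSet s)) ↔ R G) :
    {G | P (G.induce s) ∧ R G}.ncard =
      {H | P H}.ncard * {T | T.induce s = ⊥ ∧ R T}.ncard := by
  simp only [← Nat.card_coe_set_eq, ← Nat.card_prod]
  exact Nat.card_congr
    { toFun G := (⟨G.1.induce s, G.2.1⟩,
        ⟨G.1.deleteEdges (cliqueEdgeSet s), induce_deleteEdges_cliqueEdgeSet, (hR _).2 G.2.2⟩)
      invFun p := ⟨p.1.1.map (Function.Embedding.subtype s) ⊔ p.2.1,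
        by rw [induce_map_subtype_sup _ p.2.2.1]; exact p.1.2,
        (hR _).1 (by rw [deleteEdges_map_subtype_sup _ p.2.2.1]; exact p.2.2.2)⟩
      left_inv G := Subtype.ext (map_induce_sup_deleteEdges G.1)
      right_inv p := Prod.ext (Subtype.ext (induce_map_subtype_sup _ p.2.2.1))
        (Subtype.ext (deleteEdges_map_subtype_sup _ p.2.2.1)) }

end Decomposition

end SimpleGraph

lemma Fin.forall_val_eq_zero_imp_iff {m : ℕ} (hm : 0 < m) {X : Fin m → Prop} :
    (∀ i : Fin m, (i : ℕ) = 0 → X i) ↔ X ⟨0, hm⟩ :=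
  ⟨fun h => h _ rfl, fun h i hi => by rwa [show i = ⟨0, hm⟩ from Fin.ext hi]⟩

namespace IsPartition

variable {n m : ℕ} {Q : Fin m → Set (Fin n)}

lemma disjoint (hQ : IsPartition Q) {i j : Fin m} (hij : i ≠ j) : Disjoint (Q i) (Q j) :=
  Set.disjoint_left.2 fun _ hi hj => hij ((hQ _).unique hi hj)

lemma le_mul (hQ : IsPartition Q) {b : ℕ} (hb : ∀ i, (Q i).ncard ≤ b) : n ≤ m * b := by
  classical
  calc n = (Finset.univ : Finset (Fin n)).card := by simp
    _ ≤ (Finset.univ.biUnion fun i => (Q i).toFinset).card :=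
      Finset.card_le_card fun x _ => by simpa using (hQ x).exists
    _ ≤ ∑ i, (Q i).toFinset.card := Finset.card_biUnion_le
    _ ≤ ∑ _i : Fin m, b := Finset.sum_le_sum fun i _ => by
      rw [← Set.ncard_eq_toFinset_card']; exact hb i
    _ = m * b := by simp

end IsPartition

lemma templateClassProp_iff {k : ℕ} (hk : 6 ≤ k) {W : Type*} {H : SimpleGraph W} :
    TemplateClassProp k H ↔ UnionOfStarsAndTriangles H := by
  rw [TemplateClassProp, if_neg (by omega), if_neg (by omega)]

section Templates

variable {k n : ℕ} {Q : Fin (k - 1) → Set (Fin n)}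

lemma isKTemplateOn_iff (hk : 6 ≤ k) (hQ : IsPartition Q) {G : SimpleGraph (Fin n)} :
    IsKTemplateOn k G Q ↔ UnionOfStarsAndTriangles (G.induce (Q ⟨0, by omega⟩))ᶜ ∧
      ∀ i : Fin (k - 1), (i : ℕ) ≠ 0 → IsCliqueGraph (G.induce (Q i)) := by
  rw [IsKTemplateOn, Fin.forall_val_eq_zero_imp_iff (by omega), templateClassProp_iff hk]
  tauto

lemma ncard_templates_atMostOne_mul_le (hk : 6 ≤ k) (hQ : IsPartition Q) {N : ℕ}
    (hN : {K : SimpleGraph (Q ⟨0, by omega⟩) | UnionOfStarsAndTriangles K ∧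
        K.AtMostOneNontrivialComponent}.ncard * N ≤
      {K : SimpleGraph (Q ⟨0, by omega⟩) | UnionOfStarsAndTriangles K}.ncard) :
    {G | IsKTemplateOn k G Q ∧ ∀ i : Fin (k - 1), (i : ℕ) = 0 →
        (G.induce (Q i))ᶜ.AtMostOneNontrivialComponent}.ncard * N ≤
      {G | IsKTemplateOn k G Q}.ncard := by
  set i₀ : Fin (k - 1) := ⟨0, by omega⟩
  set R : SimpleGraph (Fin n) → Prop := fun G =>
    ∀ i : Fin (k - 1), (i : ℕ) ≠ 0 → IsCliqueGraph (G.induce (Q i))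
  have hR : ∀ G, R (G.deleteEdges (cliqueEdgeSet (Q i₀))) ↔ R G := fun G =>
    forall₂_congr fun i hi => by
      rw [induce_deleteEdges_cliqueEdgeSet_of_disjoint
        (hQ.disjoint fun h => hi (congrArg Fin.val h).symm)]
  have hA : {G | IsKTemplateOn k G Q ∧ ∀ i : Fin (k - 1), (i : ℕ) = 0 →
      (G.induce (Q i))ᶜ.AtMostOneNontrivialComponent} =
        {G | (UnionOfStarsAndTriangles (G.induce (Q i₀))ᶜ ∧
          (G.induce (Q i₀))ᶜ.AtMostOneNontrivialComponent) ∧ R G} := by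
    ext G
    simp only [Set.mem_ofPred_eq, isKTemplateOn_iff hk hQ,
      Fin.forall_val_eq_zero_imp_iff (show 0 < k - 1 by omega)]
    tauto
  have hB : {G | IsKTemplateOn k G Q} =
      {G | UnionOfStarsAndTriangles (G.induce (Q i₀))ᶜ ∧ R G} := by
    ext G
    exact isKTemplateOn_iff hk hQ
  rw [hA, hB, ncard_setOf_induce_and (fun H => UnionOfStarsAndTriangles Hᶜ ∧
      Hᶜ.AtMostOneNontrivialComponent) hR,
    ncard_setOf_induce_and (fun H => UnionOfStarsAndTriangles Hᶜ) hR,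
    ncard_setOf_compl (fun K => UnionOfStarsAndTriangles K ∧ K.AtMostOneNontrivialComponent),
    ncard_setOf_compl UnionOfStarsAndTriangles, mul_right_comm]
  exact Nat.mul_le_mul_right _ hN

end Templates

lemma eventually_two_pow_mul_le_factorial_half (j : ℕ) :
    ∀ᶠ m in atTop, 2 ^ m * m * 2 * 2 ^ (j * (m + 1)) ≤ (m / 2)! := by
  obtain ⟨T, hT⟩ := eventually_atTop.1 (Nat.eventually_pow_lt_factorial_sub (2 ^ (2 * j + 6)) 0)
  filter_upwards [eventually_ge_atTop (2 * T), eventually_ge_atTop (2 * j + 4)] with m hmT hmj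
  have hexp : 2 * m + 1 + j * (m + 1) ≤ (2 * j + 6) * (m / 2) := by
    have h1 : m ≤ 2 * (m / 2) + 1 := by omega
    have h2 : j + 2 ≤ m / 2 := by omega
    nlinarith
  calc 2 ^ m * m * 2 * 2 ^ (j * (m + 1)) ≤ 2 ^ m * 2 ^ m * 2 * 2 ^ (j * (m + 1)) := by
        gcongr; exact Nat.lt_two_pow_self.le
    _ = 2 ^ (2 * m + 1 + j * (m + 1)) := by ring
    _ ≤ 2 ^ ((2 * j + 6) * (m / 2)) := Nat.pow_le_pow_right two_pos hexp
    _ = (2 ^ (2 * j + 6)) ^ (m / 2) := pow_mul _ _ _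
    _ ≤ (m / 2)! := (hT _ (by omega)).le

/-- (Proposition: two components.) Let `k ≥ 6`. For all sufficiently
large `n` and every balanced ordered `(k−1)`-partition `Q` of `[n]`, the proportion of
`k`-templates `G` on `Q` such that the complement of `G[Q₀]` has at most one non-trivial
component is at most `2^{−n}`. -/
theorem two_components (k : ℕ) (hk : 6 ≤ k) :
    ∃ n0 : ℕ, ∀ n : ℕ, n0 ≤ n →
      ∀ Q : Fin (k - 1) → Set (Fin n), IsPartition Q →
        (∀ i j : Fin (k - 1), (Q i).ncard ≤ (Q j).ncard + 1) →
        (({G : SimpleGraph (Fin n) | IsKTemplateOn k G Q ∧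
            ∀ i : Fin (k - 1), (i : ℕ) = 0 →
              {c : ((G.induce (Q i))ᶜ).ConnectedComponent |
                2 ≤ Nat.card c.supp}.Subsingleton}).ncard : ℝ) ≤
          (2 : ℝ) ^ (-(n : ℝ)) *
            (({G : SimpleGraph (Fin n) | IsKTemplateOn k G Q}).ncard : ℝ) := by
  obtain ⟨M, hM⟩ := eventually_atTop.1
    ((eventually_two_pow_mul_le_factorial_half (k - 1)).and (eventually_ge_atTop 1))
  refine ⟨(k - 1) * (M + 1), fun n hn Q hQ hbal => ?_⟩
  set Q₀ := Q ⟨0, by omega⟩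
  set m := Q₀.ncard
  have hn_le : n ≤ (k - 1) * (m + 1) := hQ.le_mul fun i => hbal i _
  have hM_le : M ≤ m := by
    have := Nat.le_of_mul_le_mul_left (hn.trans hn_le) (by omega : 0 < k - 1)
    omega
  obtain ⟨hfac, hm⟩ := hM m hM_le
  have hcard : Nat.card Q₀ = m := Nat.card_coe_set_eq Q₀
  have : Nonempty Q₀ := (Set.nonempty_of_ncard_ne_zero (by omega)).to_subtype
  have key : {K : SimpleGraph Q₀ | UnionOfStarsAndTriangles K ∧
      K.AtMostOneNontrivialComponent}.ncard * 2 ^ n ≤ {K | UnionOfStarsAndTriangles K}.ncard :=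
    calc _ ≤ 2 ^ m * m * 2 * 2 ^ ((k - 1) * (m + 1)) := by
          rw [← hcard]
          exact Nat.mul_le_mul ncard_unionOfStarsAndTriangles_atMostOne_le
            (Nat.pow_le_pow_right two_pos (hcard ▸ hn_le))
      _ ≤ (m / 2)! := hfac
      _ ≤ _ := factorial_le_ncard_unionOfStarsAndTriangles (V := Q₀) (by omega)
  rw [Real.rpow_neg zero_le_two, Real.rpow_natCast, inv_mul_eq_div, le_div_iff₀ (by positivity)]
  exact_mod_cast ncard_templates_atMostOne_mul_le hk hQ key
end

section
/- For every k ≥ 4 there exists μ_0 > 0 such that for every 0 < μ ≤ μ_0 there exists η_0 > 0 such that for every 0 < η ≤ η_0 there exists n_0 ∈ ℕ such that the following holds for all n ≥ n_0. Let Q = (Q_0, {Q_1, …, Q_{k−2}}) be an ordered (k−1)-partition of [n] and suppose G ∈ F_Q(n,k,η,μ). Let I ⊆ {0,1,…,k−2}, and for every i ∈ I let A_i, B_i ⊆ Q_i be disjoint sets with |A_i|, |B_i| ≥ μ^{1/2} n. Let T be a graph on 2|I| vertices having a perfect matching whose edges are v_i u_i for i ∈ I. Then there exists an injection f : V(T)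 → [n] with f(v_i) ∈ A_i and f(u_i) ∈ B_i for every i ∈ I such that f(V(T)) induces on G a copy of T, i.e. for all distinct x, y ∈ V(T), f(x)f(y) ∈ E(G) if and only if xy ∈ E(T). -/
open SimpleGraph

/-!
Greedy embedding. The vertices of `T` are embedded one at a time, keeping for every vertex `w`
not yet embedded a candidate set `C w` of vertices of `G` with the prescribed adjacencies to
everything embedded so far. To embed `v` we need `a ∈ C v` with the right adjacency to at least an
eighth of every other `C w`, since then the candidate sets shrink by a factor of at most 8. A vertex
failing this for `w` in another part would, together with many others, violate `(F1)`; so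
`#bad * #C w ≤ μ²n²`. If `w` is the partner of `v`, every bad vertex sees at least `7/8` of `C w`
as internal non-edges of `Q_i`, so `#bad * #C w ≤ 8ηn²/7`. With candidate sets of size at least
`√μ n / 8^(2k)` and `η ≪ μ ≪ 1/k`, the bad vertices cannot cover `C v`.
-/

open Finset

theorem Rel.card_interedges_eq_sum {α β : Type*} (r : α → β → Prop) [∀ a, DecidablePred (r a)]
    (s : Finset α) (t : Finset β) : #(Rel.interedges r s t) = ∑ a ∈ s, #{b ∈ t | r a b} := by
  classical
  rw [Rel.interedges_eq_biUnion, card_biUnion]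
  · simp only [card_map]
  · intro a _ a' _ haa'
    simp only [Finset.disjoint_left, mem_map, Function.Embedding.coeFn_mk]
    rintro _ ⟨b, -, rfl⟩ ⟨b', -, h⟩
    exact haa' (Prod.mk.inj h).1.symm

theorem eBetween_coe {n : ℕ} (G : SimpleGraph (Fin n)) [DecidableRel G.Adj]
    (s t : Finset (Fin n)) : eBetween G s t = #(G.interedges s t) := by
  rw [eBetween, ← Nat.card_eq_finsetCard]
  exact Nat.card_congr (Equiv.subtypeEquivRight fun p => by simp [mem_interedges_iff])

namespace SimpleGraph

variable {V : Type*} (G : SimpleGraph V) [DecidableRel G.Adj]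

def atypical (s t : Finset V) (p : Prop) [Decidable p] : Finset V :=
  {a ∈ s | 8 * #{b ∈ t | G.Adj a b ↔ p} < #t}

variable {G}

theorem eight_mul_card_interedges_atypical_le (s t : Finset V) (p : Prop) [Decidable p] :
    8 * #(Rel.interedges (fun a b => G.Adj a b ↔ p) (G.atypical s t p) t) ≤
      #(G.atypical s t p) * #t := by
  rw [Rel.card_interedges_eq_sum, mul_sum, ← smul_eq_mul]
  exact sum_le_card_nsmul _ _ _ fun a ha => (mem_filter.1 ha).2.le

theorem card_interedges_not_adj_le_card_edgeSet_compl_induce [Finite V] {Q : Set V}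
    {s t : Finset V} (hs : ↑s ⊆ Q) (ht : ↑t ⊆ Q) (hst : Disjoint s t) :
    #(Rel.interedges (fun a b => ¬ G.Adj a b) s t) ≤ Nat.card (G.induce Q)ᶜ.edgeSet := by
  rw [← Nat.card_eq_finsetCard]
  have hne {p : V × V} (hp : p ∈ Rel.interedges (fun a b => ¬ G.Adj a b) s t) : p.1 ≠ p.2 :=
    fun h => Finset.disjoint_left.1 hst (Rel.mem_interedges_iff.1 hp).1
      (h ▸ (Rel.mem_interedges_iff.1 hp).2.1)
  refine Nat.card_le_card_of_injective (fun p => ⟨s(⟨p.1.1, hs (Rel.mem_interedges_iff.1 p.2).1⟩,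
    ⟨p.1.2, ht (Rel.mem_interedges_iff.1 p.2).2.1⟩), ?_⟩) ?_
  · simpa using ⟨hne p.2, (Rel.mem_interedges_iff.1 p.2).2.2⟩
  · rintro ⟨⟨a, b⟩, hab⟩ ⟨⟨a', b'⟩, hab'⟩ h
    simp only [Subtype.mk.injEq, Sym2.eq_iff] at h
    rcases h with ⟨rfl, rfl⟩ | ⟨rfl, rfl⟩
    · rfl
    · exact absurd (Rel.mem_interedges_iff.1 hab').2.1
        (Finset.disjoint_left.1 hst (Rel.mem_interedges_iff.1 hab).1)

theorem interedges_adj_iff_of_pos {p : Prop} [Decidable p] (hp : p) (s t : Finset V) :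
    Rel.interedges (fun a b => G.Adj a b ↔ p) s t = G.interedges s t := by
  ext; simp [Rel.mem_interedges_iff, mem_interedges_iff, hp]

theorem interedges_adj_iff_of_neg {p : Prop} [Decidable p] (hp : ¬ p) (s t : Finset V) :
    Rel.interedges (fun a b => G.Adj a b ↔ p) s t =
      Rel.interedges (fun a b => ¬ G.Adj a b) s t := by
  ext; simp [Rel.mem_interedges_iff, hp]

theorem seven_mul_card_atypical_mul_card_le [Finite V] {Q : Set V} {s t : Finset V}
    (hs : ↑s ⊆ Q) (ht : ↑t ⊆ Q) (hst : Disjoint s t) {p : Prop} [Decidable p] (hp : p) :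
    7 * (#(G.atypical s t p) * #t) ≤ 8 * Nat.card (G.induce Q)ᶜ.edgeSet := by
  set b := G.atypical s t p
  have hb : b ⊆ s := filter_subset _ _
  have h8 := eight_mul_card_interedges_atypical_le (G := G) s t p
  rw [interedges_adj_iff_of_pos hp] at h8
  have hsplit := Rel.card_interedges_add_card_interedges_compl G.Adj b t
  have hnon := card_interedges_not_adj_le_card_edgeSet_compl_induce (G := G)
    ((coe_subset.2 hb).trans hs) ht (hst.mono_left hb)
  change 8 * #(Rel.interedges G.Adj b t) ≤ #b * #t at h8
  omega

end SimpleGraph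

open SimpleGraph

theorem card_atypical_mul_card_le_of_propF1 {k n : ℕ} {μ : ℝ} {G : SimpleGraph (Fin n)}
    [DecidableRel G.Adj] {Q : Fin (k - 1) → Set (Fin n)} (hF1 : PropF1 k μ G Q)
    {i j : Fin (k - 1)} (hij : i ≠ j) {s t : Finset (Fin n)} (hs : ↑s ⊆ Q i) (ht : ↑t ⊆ Q j)
    (p : Prop) [Decidable p] : (#(G.atypical s t p) * #t : ℝ) ≤ μ ^ 2 * n ^ 2 := by
  set b := G.atypical s t p
  -- (F1) puts the density of `b` into `t` in `[1/4, 3/4]`, while by atypicality the relation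
  -- `Adj ↔ p` has density at most `1/8` between them.
  by_contra! hlt
  have hpos : (0 : ℝ) < #b * #t := (by positivity : (0 : ℝ) ≤ μ ^ 2 * n ^ 2).trans_lt hlt
  obtain ⟨hlow, hhigh⟩ := hF1 i j hij b t ((coe_subset.2 (filter_subset _ _)).trans hs) ht
    (by simpa only [Set.ncard_coe_finset] using hlt.le)
  simp only [Set.ncard_coe_finset, eBetween_coe] at hlow hhigh
  rw [le_div_iff₀ hpos] at hlow
  rw [div_le_iff₀ hpos] at hhigh
  have h8 : (8 * #(Rel.interedges (fun a b => G.Adj a b ↔ p) b t) : ℝ) ≤ #b * #t := by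
    exact_mod_cast eight_mul_card_interedges_atypical_le (G := G) s t p
  by_cases hp : p
  · rw [interedges_adj_iff_of_pos hp] at h8
    linarith
  · rw [interedges_adj_iff_of_neg hp] at h8
    have hsplit : (#(G.interedges b t) + #(Rel.interedges (fun a b => ¬G.Adj a b) b t) : ℝ) =
        #b * #t := by
      exact_mod_cast Rel.card_interedges_add_card_interedges_compl G.Adj b t
    linarith

theorem card_edgeSet_compl_induce_le_internalNonEdges {k n : ℕ} (G : SimpleGraph (Fin n))
    (Q : Fin (k - 1) → Set (Fin n)) (i : Fin (k - 1)) :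
    Nat.card (G.induce (Q i))ᶜ.edgeSet ≤ internalNonEdges k G Q :=
  single_le_sum (f := fun i => Nat.card (G.induce (Q i))ᶜ.edgeSet) (fun _ _ => Nat.zero_le _)
    (mem_univ i)

theorem card_atypical_mul_card_le {k n : ℕ} {μ η : ℝ} {G : SimpleGraph (Fin n)}
    [DecidableRel G.Adj] {Q : Fin (k - 1) → Set (Fin n)}
    (hIE : (internalNonEdges k G Q : ℝ) ≤ η * n ^ 2) (hF1 : PropF1 k μ G Q) (hη : 0 ≤ η)
    {α : Type*} {T : SimpleGraph α} [DecidableRel T.Adj] {π : α → Fin (k - 1)}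
    {base : α → Finset (Fin n)} (hsub : ∀ v, ↑(base v) ⊆ Q (π v))
    (hdisj : ∀ v w, v ≠ w → π v = π w → Disjoint (base v) (base w))
    (hT : ∀ v w, v ≠ w → π v = π w → T.Adj v w) {v w : α} (hvw : v ≠ w)
    {s t : Finset (Fin n)} (hs : s ⊆ base v) (ht : t ⊆ base w) :
    (#(G.atypical s t (T.Adj w v)) * #t : ℝ) ≤ (μ ^ 2 + 2 * η) * n ^ 2 := by
  have hsQ := (coe_subset.2 hs).trans (hsub v)
  have htQ := (coe_subset.2 ht).trans (hsub w)
  have hηn : 0 ≤ η * n ^ 2 := mul_nonneg hη (sq_nonneg _)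
  by_cases hπ : π v = π w
  · rw [← hπ] at htQ
    have h7 : (7 * (#(G.atypical s t (T.Adj w v)) * #t) : ℝ) ≤
        8 * Nat.card (G.induce (Q (π v)))ᶜ.edgeSet := by
      exact_mod_cast seven_mul_card_atypical_mul_card_le hsQ htQ
        ((hdisj v w hvw hπ).mono hs ht) (hT w v hvw.symm hπ.symm)
    have hQ : (Nat.card (G.induce (Q (π v)))ᶜ.edgeSet : ℝ) ≤ η * n ^ 2 :=
      le_trans (by exact_mod_cast card_edgeSet_compl_induce_le_internalNonEdges G Q (π v)) hIE
    linarith [sq_nonneg (μ * n)]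
  · have := card_atypical_mul_card_le_of_propF1 hF1 hπ hsQ htQ (T.Adj w v)
    linarith

section Greedy

variable {α V : Type*} [DecidableEq α] {G : SimpleGraph V} [DecidableRel G.Adj]
  {T : SimpleGraph α} [DecidableRel T.Adj] {base : α → Finset V} {τ : ℝ}

structure IsGreedyState (G : SimpleGraph V) (T : SimpleGraph α) (base : α → Finset V) (τ : ℝ)
    (R : Finset α) (C : α → Finset V) (f : α → V) : Prop where
  subset_base : ∀ v, C v ⊆ base v
  le_card : ∀ v ∈ R, 8 ^ #R * τ ≤ #(C v)
  adj_iff_of_mem : ∀ v ∈ R, ∀ c ∈ C v, ∀ u ∉ R, (G.Adj c (f u) ↔ T.Adj v u)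
  mem_base : ∀ u ∉ R, f u ∈ base u
  adj_iff : ∀ u ∉ R, ∀ u' ∉ R, u ≠ u' → (G.Adj (f u) (f u') ↔ T.Adj u u')

namespace IsGreedyState

variable {R : Finset α} {C : α → Finset V} {f : α → V}

theorem exists_not_mem_atypical [Fintype α] [DecidableEq V] {β : ℝ}
    (hS : IsGreedyState G T base τ R C f) (hτ : 0 < τ)
    (hatyp : ∀ v w, v ≠ w → ∀ s ⊆ base v, ∀ t ⊆ base w,
      (#(G.atypical s t (T.Adj w v)) * #t : ℝ) ≤ β)
    (hβ : Fintype.card α * β < τ ^ 2) {v : α} (hv : v ∈ R) :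
    ∃ a ∈ C v, ∀ w ∈ R.erase v, a ∉ G.atypical (C v) (C w) (T.Adj w v) := by
  by_contra! hbad
  have hge : ∀ w ∈ R, τ ≤ #(C w) := fun w hw =>
    le_trans (le_mul_of_one_le_left hτ.le (one_le_pow₀ (by norm_num))) (hS.le_card w hw)
  have hcover : #(C v) ≤ ∑ w ∈ R.erase v, #(G.atypical (C v) (C w) (T.Adj w v)) :=
    (card_le_card fun a ha => mem_biUnion.2 (hbad a ha)).trans card_biUnion_le
  have hsum : τ * #(C v) ≤ #(R.erase v) * β := by
    calc τ * #(C v) ≤ τ * ∑ w ∈ R.erase v, (#(G.atypical (C v) (C w) (T.Adj w v)) : ℝ) := by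
          gcongr; exact_mod_cast hcover
      _ = ∑ w ∈ R.erase v, τ * #(G.atypical (C v) (C w) (T.Adj w v)) := mul_sum _ _ _
      _ ≤ ∑ w ∈ R.erase v, (#(G.atypical (C v) (C w) (T.Adj w v)) * #(C w) : ℝ) := by
          refine sum_le_sum fun w hw => ?_
          rw [mul_comm]
          exact mul_le_mul_of_nonneg_left (hge w (mem_of_mem_erase hw)) (Nat.cast_nonneg _)
      _ ≤ #(R.erase v) * β := by
          rw [← nsmul_eq_mul]
          exact sum_le_card_nsmul _ _ _ fun w hw => hatyp v w (ne_of_mem_erase hw).symm _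
            (hS.subset_base v) _ (hS.subset_base w)
  have hcard : (#(R.erase v) : ℝ) ≤ Fintype.card α := by exact_mod_cast card_le_univ _
  have hτv := hge v hv
  rcases le_or_gt 0 β with hβ0 | hβ0 <;> nlinarith

theorem erase (hS : IsGreedyState G T base τ R C f) {v : α} (hv : v ∈ R) {a : V} (ha : a ∈ C v)
    (htyp : ∀ w ∈ R.erase v, a ∉ G.atypical (C v) (C w) (T.Adj w v)) :
    IsGreedyState G T base τ (R.erase v) (fun w => {c ∈ C w | G.Adj a c ↔ T.Adj w v})
      (Function.update f v a) where
  subset_base w := (filter_subset _ _).trans (hS.subset_base w)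
  le_card w hw := by
    have hR : 8 ^ #R * τ ≤ #(C w) := hS.le_card w (mem_of_mem_erase hw)
    have htw : ¬ 8 * #{c ∈ C w | G.Adj a c ↔ T.Adj w v} < #(C w) := fun h =>
      htyp w hw (mem_filter.2 ⟨ha, h⟩)
    rw [← card_erase_add_one hv, pow_succ] at hR
    have : (#(C w) : ℝ) ≤ 8 * #{c ∈ C w | G.Adj a c ↔ T.Adj w v} := by
      exact_mod_cast not_lt.1 htw
    linarith
  adj_iff_of_mem w hw c hc u hu := by
    rcases eq_or_ne u v with rfl | huv
    · rw [Function.update_self, G.adj_comm]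
      exact (mem_filter.1 hc).2
    · rw [Function.update_of_ne huv]
      exact hS.adj_iff_of_mem w (mem_of_mem_erase hw) c (mem_of_mem_filter c hc) u
        fun h => hu (mem_erase.2 ⟨huv, h⟩)
  mem_base u hu := by
    rcases eq_or_ne u v with rfl | huv
    · rw [Function.update_self]
      exact hS.subset_base u ha
    · rw [Function.update_of_ne huv]
      exact hS.mem_base u fun h => hu (mem_erase.2 ⟨huv, h⟩)
  adj_iff u hu u' hu' huu' := by
    have hR {x : α} (hx : x ∉ R.erase v) (hxv : x ≠ v) : x ∉ R :=
      fun h => hx (mem_erase.2 ⟨hxv, h⟩)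
    rcases eq_or_ne u v with rfl | huv
    · rw [Function.update_self, Function.update_of_ne huu'.symm]
      exact hS.adj_iff_of_mem u hv a ha u' (hR hu' huu'.symm)
    rcases eq_or_ne u' v with rfl | hu'v
    · rw [Function.update_self, Function.update_of_ne huv, G.adj_comm, T.adj_comm]
      exact hS.adj_iff_of_mem u' hv a ha u (hR hu huv)
    rw [Function.update_of_ne huv, Function.update_of_ne hu'v]
    exact hS.adj_iff u (hR hu huv) u' (hR hu' hu'v) huu'

theorem exists_embedding [Fintype α] [DecidableEq V] {β : ℝ}
    (hS : IsGreedyState G T base τ R C f) (hτ : 0 < τ)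
    (hatyp : ∀ v w, v ≠ w → ∀ s ⊆ base v, ∀ t ⊆ base w,
      (#(G.atypical s t (T.Adj w v)) * #t : ℝ) ≤ β)
    (hβ : Fintype.card α * β < τ ^ 2) :
    ∃ g : α → V, (∀ u, g u ∈ base u) ∧ ∀ u u', u ≠ u' → (G.Adj (g u) (g u') ↔ T.Adj u u') := by
  induction R using Finset.strongInduction generalizing C f with
  | H R ih =>
    obtain rfl | ⟨v, hv⟩ := R.eq_empty_or_nonempty
    · exact ⟨f, fun u => hS.mem_base u (notMem_empty u),
        fun u u' => hS.adj_iff u (notMem_empty u) u' (notMem_empty u')⟩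
    obtain ⟨a, ha, htyp⟩ := hS.exists_not_mem_atypical hτ hatyp hβ hv
    exact ih _ (erase_ssubset hv) (hS.erase hv ha htyp)

end IsGreedyState

theorem exists_induced_embedding_of_card_atypical_le [Fintype α] [DecidableEq V] {β : ℝ}
    (hτ : 0 < τ)
    (hbase : ∀ v, 8 ^ Fintype.card α * τ ≤ #(base v))
    (hatyp : ∀ v w, v ≠ w → ∀ s ⊆ base v, ∀ t ⊆ base w,
      (#(G.atypical s t (T.Adj w v)) * #t : ℝ) ≤ β)
    (hβ : Fintype.card α * β < τ ^ 2) :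
    ∃ g : α → V, (∀ u, g u ∈ base u) ∧ ∀ u u', u ≠ u' → (G.Adj (g u) (g u') ↔ T.Adj u u') := by
  have hne (v : α) : (base v).Nonempty := card_pos.1 <| by
    exact_mod_cast (by positivity : (0 : ℝ) < 8 ^ Fintype.card α * τ).trans_le (hbase v)
  have hS : IsGreedyState G T base τ univ base fun v => (hne v).choose :=
    { subset_base := fun _ => subset_rfl
      le_card := fun v _ => by simpa using hbase v
      adj_iff_of_mem := fun _ _ _ _ u hu => absurd (mem_univ u) hu
      mem_base := fun u hu => absurd (mem_univ u) hu
      adj_iff := fun u hu => absurd (mem_univ u) hu }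
  exact hS.exists_embedding hτ hatyp hβ

end Greedy

theorem exists_injective_induced_embedding_of_propF1 {k n N : ℕ} {μ η : ℝ}
    {G : SimpleGraph (Fin n)} {Q : Fin (k - 1) → Set (Fin n)} (hQ : IsPartition Q)
    (hIE : (internalNonEdges k G Q : ℝ) ≤ η * n ^ 2) (hF1 : PropF1 k μ G Q) (hμ : 0 < μ)
    (hη : 0 ≤ η) (hn : 0 < n) {α : Type*} [Fintype α] {T : SimpleGraph α} {π : α → Fin (k - 1)}
    {base : α → Finset (Fin n)} (hsub : ∀ v, ↑(base v) ⊆ Q (π v))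
    (hdisj : ∀ v w, v ≠ w → π v = π w → Disjoint (base v) (base w))
    (hT : ∀ v w, v ≠ w → π v = π w → T.Adj v w) (hN : Fintype.card α ≤ N)
    (hbase : ∀ v, √μ * n ≤ #(base v)) (hsmall : N * (μ ^ 2 + 2 * η) < μ / (8 ^ N) ^ 2) :
    ∃ f : α → Fin n, Function.Injective f ∧ (∀ v, f v ∈ base v) ∧
      ∀ u v, u ≠ v → (G.Adj (f u) (f v) ↔ T.Adj u v) := by
  classical
  set τ := √μ * n / 8 ^ N
  have hτ : 0 < τ := by positivity
  obtain ⟨f, hf, hfT⟩ := exists_induced_embedding_of_card_atypical_le (G := G) (T := T) hτ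
    (fun v => calc
      8 ^ Fintype.card α * τ ≤ 8 ^ N * τ := by gcongr; norm_num
      _ = √μ * n := mul_div_cancel₀ _ (by positivity)
      _ ≤ #(base v) := hbase v)
    (fun v w hvw s hs t ht => card_atypical_mul_card_le hIE hF1 hη hsub hdisj hT hvw hs ht)
    (calc
      Fintype.card α * ((μ ^ 2 + 2 * η) * n ^ 2) ≤ N * (μ ^ 2 + 2 * η) * n ^ 2 := by
        rw [← mul_assoc]; gcongr
      _ < μ / (8 ^ N) ^ 2 * n ^ 2 := by gcongr
      _ = τ ^ 2 := by rw [div_pow, mul_pow, Real.sq_sqrt hμ.le]; ring)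
  refine ⟨f, fun u v huv => ?_, hf, hfT⟩
  by_contra hne
  by_cases hπ : π u = π v
  · exact Finset.disjoint_left.1 (hdisj u v hne hπ) (hf u) (huv ▸ hf v)
  · exact hπ ((hQ (f u)).unique (hsub u (hf u)) (huv ▸ hsub v (hf v)))

theorem exists_building_constants (N : ℕ) :
    ∃ μ0 : ℝ, 0 < μ0 ∧ ∀ μ : ℝ, 0 < μ → μ ≤ μ0 → ∃ η0 : ℝ, 0 < η0 ∧ ∀ η : ℝ, 0 < η → η ≤ η0 →
      N * (μ ^ 2 + 2 * η) < μ / (8 ^ N) ^ 2 := by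
  set P : ℝ := (8 ^ N) ^ 2
  have hP : 0 < P := by positivity
  set c : ℝ := (N + 1) * P
  have hc : 0 < c := by positivity
  refine ⟨1 / (4 * c), by positivity, fun μ hμ hμ0 => ⟨μ / (4 * c), by positivity,
    fun η hη hη0 => ?_⟩⟩
  rw [le_div_iff₀ (by positivity)] at hμ0 hη0
  rw [lt_div_iff₀ hP]
  have hNP : N * P ≤ c := by simp only [c]; nlinarith
  nlinarith [mul_le_mul_of_nonneg_right hNP (by positivity : 0 ≤ μ ^ 2 + 2 * η)]

theorem exists_induced_embedding_of_pairs {k n : ℕ} {μ η : ℝ} {G : SimpleGraph (Fin n)}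
    {Q : Fin (k - 1) → Set (Fin n)} (hQ : IsPartition Q)
    (hIE : (internalNonEdges k G Q : ℝ) ≤ η * n ^ 2) (hF1 : PropF1 k μ G Q) (hμ : 0 < μ)
    (hη : 0 ≤ η) (hn : 0 < n) {I : Set (Fin (k - 1))} {A B : Fin (k - 1) → Set (Fin n)}
    (hAB : ∀ i ∈ I, A i ⊆ Q i ∧ B i ⊆ Q i ∧ Disjoint (A i) (B i) ∧
      √μ * n ≤ (A i).ncard ∧ √μ * n ≤ (B i).ncard)
    (T : SimpleGraph (I × Bool)) (hT : ∀ i : I, T.Adj (i, true) (i, false))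
    (hsmall : ((2 * k : ℕ) : ℝ) * (μ ^ 2 + 2 * η) < μ / (8 ^ (2 * k)) ^ 2) :
    ∃ f : I × Bool → Fin n, Function.Injective f ∧
      (∀ i : I, f (i, true) ∈ A i.1 ∧ f (i, false) ∈ B i.1) ∧
      ∀ x y : I × Bool, x ≠ y → (G.Adj (f x) (f y) ↔ T.Adj x y) := by
  classical
  let base : I × Bool → Finset (Fin n) := fun v => (if v.2 then A v.1 else B v.1).toFinset
  have hsub : ∀ v, ↑(base v) ⊆ Q v.1.1 := by
    rintro ⟨i, _ | _⟩ <;> simp [base, (hAB i i.2).1, (hAB i i.2).2.1]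
  have hcard : ∀ v, √μ * n ≤ #(base v) := by
    rintro ⟨i, _ | _⟩
    · simpa [base, Set.ncard_eq_toFinset_card'] using (hAB i i.2).2.2.2.2
    · simpa [base, Set.ncard_eq_toFinset_card'] using (hAB i i.2).2.2.2.1
  have hdisj : ∀ v w, v ≠ w → v.1.1 = w.1.1 → Disjoint (base v) (base w) := by
    rintro ⟨i, _ | _⟩ ⟨j, _ | _⟩ hne (hij : i.1 = j.1) <;> obtain rfl := Subtype.ext hij
    · exact absurd rfl hne
    · simpa [base] using (hAB i i.2).2.2.1.symm
    · simpa [base] using (hAB i i.2).2.2.1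
    · exact absurd rfl hne
  have hT' : ∀ v w, v ≠ w → v.1.1 = w.1.1 → T.Adj v w := by
    rintro ⟨i, _ | _⟩ ⟨j, _ | _⟩ hne (hij : i.1 = j.1) <;> obtain rfl := Subtype.ext hij
    · exact absurd rfl hne
    · exact (hT i).symm
    · exact hT i
    · exact absurd rfl hne
  have hN : Fintype.card (I × Bool) ≤ 2 * k := by
    have := set_fintype_card_le_univ I
    simp only [Fintype.card_prod, Fintype.card_bool, Fintype.card_fin] at this ⊢
    omega
  obtain ⟨f, hf, hfbase, hfT⟩ := exists_injective_induced_embedding_of_propF1 hQ hIE hF1 hμ hη hn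
    hsub hdisj hT' hN hcard hsmall
  exact ⟨f, hf, fun i => ⟨by simpa [base] using hfbase (i, true),
    by simpa [base] using hfbase (i, false)⟩, hfT⟩

theorem building_general (k : ℕ) :
    ∃ μ0 : ℝ, 0 < μ0 ∧ ∀ μ : ℝ, 0 < μ → μ ≤ μ0 →
      ∃ η0 : ℝ, 0 < η0 ∧ ∀ η : ℝ, 0 < η → η ≤ η0 →
        ∃ n0 : ℕ, ∀ n : ℕ, n0 ≤ n →
          ∀ (Q : Fin (k - 1) → Set (Fin n)) (G : SimpleGraph (Fin n)),
            MemFQetaMu k η μ G Q →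
            ∀ (I : Set (Fin (k - 1))) (A B : Fin (k - 1) → Set (Fin n)),
              (∀ i ∈ I, A i ⊆ Q i ∧ B i ⊆ Q i ∧ Disjoint (A i) (B i) ∧
                Real.sqrt μ * (n : ℝ) ≤ ((A i).ncard : ℝ) ∧
                Real.sqrt μ * (n : ℝ) ≤ ((B i).ncard : ℝ)) →
              ∀ T : SimpleGraph (I × Bool),
                (∀ i : I, T.Adj (i, true) (i, false)) →
                ∃ f : I × Bool → Fin n, Function.Injective f ∧
                  (∀ i : I, f (i, true) ∈ A i.1 ∧ f (i, false) ∈ B i.1) ∧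
                  (∀ x y : I × Bool, x ≠ y → (G.Adj (f x) (f y) ↔ T.Adj x y)) := by
  obtain ⟨μ0, hμ0, hconst⟩ := exists_building_constants (2 * k)
  refine ⟨μ0, hμ0, fun μ hμ hμμ0 => ?_⟩
  obtain ⟨η0, hη0, hconst⟩ := hconst μ hμ hμμ0
  refine ⟨η0, hη0, fun η hη hηη0 => ⟨1, fun n hn Q G hG I A B hAB T hT => ?_⟩⟩
  obtain ⟨⟨-, ⟨hQ, -⟩, hIE⟩, hF1, -⟩ := hG
  exact exists_induced_embedding_of_pairs hQ hIE hF1 hμ hη.le hn hAB T hT (hconst η hη hηη0)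

/-- (Proposition: building.) For suitable `1/n ≪ η ≪ μ ≪ 1/k`, given
`G ∈ F_Q(n,k,η,μ)`, `I ⊆ {0,…,k−2}`, disjoint sets `A_i, B_i ⊆ Q_i` of size at least
`μ^{1/2}n`, and a graph `T` on vertex set `I × Bool` containing the perfect matching
`{(i,true)(i,false) : i ∈ I}`, there is an induced embedding of `T` into `G` placing
`(i,true)` in `A_i` and `(i,false)` in `B_i`. -/
theorem building (k : ℕ) (hk : 4 ≤ k) :
    ∃ μ0 : ℝ, 0 < μ0 ∧ ∀ μ : ℝ, 0 < μ → μ ≤ μ0 →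
      ∃ η0 : ℝ, 0 < η0 ∧ ∀ η : ℝ, 0 < η → η ≤ η0 →
        ∃ n0 : ℕ, ∀ n : ℕ, n0 ≤ n →
          ∀ (Q : Fin (k - 1) → Set (Fin n)) (G : SimpleGraph (Fin n)),
            MemFQetaMu k η μ G Q →
            ∀ (I : Set (Fin (k - 1))) (A B : Fin (k - 1) → Set (Fin n)),
              (∀ i ∈ I, A i ⊆ Q i ∧ B i ⊆ Q i ∧ Disjoint (A i) (B i) ∧
                Real.sqrt μ * (n : ℝ) ≤ ((A i).ncard : ℝ) ∧
                Real.sqrt μ * (n : ℝ) ≤ ((B i).ncard : ℝ)) →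
              ∀ T : SimpleGraph (I × Bool),
                (∀ i : I, T.Adj (i, true) (i, false)) →
                ∃ f : I × Bool → Fin n, Function.Injective f ∧
                  (∀ i : I, f (i, true) ∈ A i.1 ∧ f (i, false) ∈ B i.1) ∧
                  (∀ x y : I × Bool, x ≠ y → (G.Adj (f x) (f y) ↔ T.Adj x y)) :=
  building_general k
end
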